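/- arXiv:1611.00424 — 7 statements merged into one kernel-verified Lean document; each statement's English description precedes it below -/
import Mathlib

section
/- Let d ≥ 2 be an integer, β > 0, J > 0, θ = tanh(βJ), (h_k)_{k≥1} a real sequence, and (b_k)_{k≥1} a real sequence. Consider the rooted tree whose vertices at generation k are the words of length k over an alphabet of d symbols (each vertex having exactly d children) and, for each n ≥ 1, the probability measure μ_n on configurations σ : V_n → {-1,1} (where V_n is the set of all words of length between 1 and n) given by μ_n(σ) = Z_n^{-1} exp( βJ Σ_{edges ⟨x,y⟩ of V_n} σ_x σ_y + Σ_{k=1}^{n-1} Σ_{x in generation k} h_k σ_x + Σ_{x in generation n} b_n σ_x ), where Z_n is the normalizing constant. Then the family (μ_n)_{n≥1} is compatible — i.e., for every n ≥ 2 and every configuration σ on V_{n-1}, summing μ_n(σ ∨ ω) over all configurations ω on generation n yields μ_{n-1}(σ) — if and only if for every n ≥ 2 one has b_{n-1} = h_{n-1} + d·arctanh(θ·tanh(b_n)). -/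
/-- The inverse hyperbolic tangent, `arctanh x = (1/2)·log((1+x)/(1-x))`. -/
noncomputable def arctanh (x : ℝ) : ℝ := (1 / 2) * Real.log ((1 + x) / (1 - x))

/-- A spin configuration on `V_n`, the vertices of the Cayley tree at generations
`1, …, n` (words of length `k` over an alphabet of `d` symbols, for `1 ≤ k ≤ n`);
here `n = m + 1`.  A vertex is `⟨k, w⟩` with `k : Fin n` and `w` a word of length
`k + 1`, i.e. the vertex is at generation `k + 1`. -/
abbrev CayleyConf (d n : ℕ) := (Σ k : Fin n, (Fin (k.1 + 1) → Fin d)) → Bool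

/-- The spin value of a site: `true ↦ +1`, `false ↦ -1`. -/
noncomputable def spin (s : Bool) : ℝ := if s then 1 else -1

/-- The exponent in the splitting Gibbs measure on `V_{m+1}`:
`βJ Σ_{edges} σ_x σ_y + Σ_{k=1}^{m} Σ_{x ∈ W_k} h_k σ_x + Σ_{x ∈ W_{m+1}} b_{m+1} σ_x`,
the edges of `V_{m+1}` being the pairs `{w, w·i}` with `w` of length `1 ≤ k ≤ m`. -/
noncomputable def isingExponent (d : ℕ) (β J : ℝ) (h b : ℕ → ℝ) (m : ℕ)
    (σ : CayleyConf d (m + 1)) : ℝ :=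
  β * J * ∑ k : Fin m, ∑ w : Fin (k.1 + 1) → Fin d, ∑ i : Fin d,
      spin (σ ⟨⟨k.1, Nat.lt_succ_of_lt k.isLt⟩, w⟩) *
        spin (σ ⟨⟨k.1 + 1, Nat.succ_lt_succ k.isLt⟩, Fin.snoc w i⟩)
    + (∑ k : Fin m, ∑ w : Fin (k.1 + 1) → Fin d,
        h (k.1 + 1) * spin (σ ⟨⟨k.1, Nat.lt_succ_of_lt k.isLt⟩, w⟩))
    + ∑ w : Fin (m + 1) → Fin d,
        b (m + 1) * spin (σ ⟨⟨m, Nat.lt_succ_self m⟩, w⟩)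

/-- The partition function of the splitting Gibbs measure on `V_{m+1}`. -/
noncomputable def isingZ (d : ℕ) (β J : ℝ) (h b : ℕ → ℝ) (m : ℕ) : ℝ :=
  ∑ σ : CayleyConf d (m + 1), Real.exp (isingExponent d β J h b m σ)

/-- The splitting Gibbs measure `μ_{m+1}` on configurations on `V_{m+1}`. -/
noncomputable def isingMu (d : ℕ) (β J : ℝ) (h b : ℕ → ℝ) (m : ℕ)
    (σ : CayleyConf d (m + 1)) : ℝ :=
  Real.exp (isingExponent d β J h b m σ) / isingZ d β J h b m

/-- The concatenation `σ ∨ ω` of a configuration `σ` on `V_{m+1}` with a configuration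
`ω` on generation `m + 2`. -/
def joinConf (d m : ℕ) (σ : CayleyConf d (m + 1))
    (ω : (Fin (m + 2) → Fin d) → Bool) : CayleyConf d (m + 2) :=
  fun v =>
    if hv : v.1.1 < m + 1 then σ ⟨⟨v.1.1, hv⟩, v.2⟩
    else ω (fun j =>
      v.2 ⟨j.1, lt_of_lt_of_le j.isLt (Nat.succ_le_succ (Nat.le_of_not_lt hv))⟩)

/-! Summing out the last generation factorizes over the vertices of the previous one: a vertex
of generation `m + 1` with spin `s` and its `d` children contribute
`exp ((h_{m+1} - b_{m+1}) s) · (2 cosh (βJ s + b_{m+2}))^d` in place of its old boundary term.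
So `∑_ω μ_{m+2}(σ ∨ ω)` is `μ_{m+1}` reweighted by the product of these factors and renormalized,
which is `μ_{m+1}` itself iff the product does not depend on `σ`, i.e. iff the factor takes the
same value at `s = ±1`. Taking logarithms, that is the recurrence, because
`arctanh (tanh x · tanh y) = ½ log (cosh (x + y) / cosh (x - y))`. -/

open Finset

lemma arctanh_tanh_mul_tanh (x y : ℝ) :
    arctanh (Real.tanh x * Real.tanh y) =
      1 / 2 * Real.log (Real.cosh (x + y) / Real.cosh (x - y)) := by
  have hx := Real.cosh_pos x
  have hy := Real.cosh_pos y
  rw [arctanh, Real.tanh_eq_sinh_div_cosh, Real.tanh_eq_sinh_div_cosh, Real.cosh_add,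
    Real.cosh_sub]
  field_simp

lemma exp_mul_two_cosh_pow_eq_iff (d : ℕ) (x y H B : ℝ) :
    Real.exp (H - B) * (2 * Real.cosh (x + y)) ^ d
        = Real.exp (B - H) * (2 * Real.cosh (-x + y)) ^ d
      ↔ B = H + d * arctanh (Real.tanh x * Real.tanh y) := by
  have exp_mul_pow : ∀ a c : ℝ, 0 < c → Real.exp a * c ^ d = Real.exp (a + d * Real.log c) :=
    fun a c hc => by rw [Real.exp_add, Real.exp_nat_mul, Real.exp_log hc]
  have hp := Real.cosh_pos (x + y)
  have hm := Real.cosh_pos (x - y)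
  rw [exp_mul_pow _ _ (by positivity), exp_mul_pow _ _ (by positivity), Real.exp_eq_exp,
    arctanh_tanh_mul_tanh, neg_add_eq_sub, ← Real.cosh_neg (y - x), neg_sub,
    Real.log_div hp.ne' hm.ne', Real.log_mul two_ne_zero hp.ne', Real.log_mul two_ne_zero hm.ne']
  constructor <;> intro hE <;> linarith

lemma sum_exp_sum_mul_spin {ι : Type*} [Fintype ι] [DecidableEq ι] (C : ι → ℝ) :
    ∑ ω : ι → Bool, Real.exp (∑ i, C i * spin (ω i)) = ∏ i, 2 * Real.cosh (C i) := by
  simp_rw [Real.exp_sum, ← Fintype.prod_sum (fun i s => Real.exp (C i * spin s))]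
  refine prod_congr rfl fun i _ => ?_
  simp only [Fintype.sum_bool, spin, ite_true, Bool.false_eq_true, ite_false, mul_one, mul_neg,
    Real.cosh_eq]
  ring

@[to_additive]
lemma prod_prod_snoc {α M : Type*} [Fintype α] [CommMonoid M] {n : ℕ}
    (f : (Fin n → α) → (Fin (n + 1) → α) → M) :
    ∏ w : Fin n → α, ∏ i : α, f w (Fin.snoc w i) = ∏ u : Fin (n + 1) → α, f (Fin.init u) u := by
  rw [← (Fin.snocEquiv fun _ => α).prod_comp, Fintype.prod_prod_type, prod_comm]
  refine prod_congr rfl fun w _ => prod_congr rfl fun i _ => ?_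
  simp only [Fin.snocEquiv, Equiv.coe_fn_mk, Fin.init_snoc]

lemma prod_comp_init {α M : Type*} [Fintype α] [CommMonoid M] {n : ℕ} (f : (Fin n → α) → M) :
    ∏ u : Fin (n + 1) → α, f (Fin.init u) = ∏ w : Fin n → α, f w ^ Fintype.card α := by
  simp [← prod_prod_snoc fun w _ => f w]

lemma forall_mul_div_sum_mul_eq_div_sum_iff {α : Type*} [Fintype α] {f g : α → ℝ}
    (hf : ∀ a, 0 < f a) (hg : ∀ a, 0 < g a) :
    (∀ a, f a * g a / ∑ b, f b * g b = f a / ∑ b, f b) ↔ ∀ a b, g a = g b := by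
  constructor
  · intro H
    have hg_eq : ∀ a, g a = (∑ c, f c * g c) / ∑ c, f c := fun a => by
      have hS : 0 < ∑ c, f c := sum_pos (fun c _ => hf c) ⟨a, mem_univ a⟩
      have hS' : 0 < ∑ c, f c * g c := sum_pos (fun c _ => mul_pos (hf c) (hg c)) ⟨a, mem_univ a⟩
      have Ha := H a
      rw [div_eq_div_iff hS'.ne' hS.ne'] at Ha
      rw [eq_div_iff hS.ne']
      exact mul_left_cancel₀ (hf a).ne' (by linear_combination Ha)
    intro a b
    rw [hg_eq a, hg_eq b]
  · intro H a
    have hsum : ∑ b, f b * g b = (∑ b, f b) * g a := by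
      rw [sum_mul]
      exact sum_congr rfl fun b _ => by rw [H b a]
    rw [hsum, mul_div_mul_right _ _ (hg a).ne']

lemma forall_prod_comp_eq_iff {V ι : Type*} [Fintype ι] [Nonempty ι] (e : ι → V)
    {g : Bool → ℝ} (hg : ∀ s, 0 ≤ g s) :
    (∀ σ τ : V → Bool, ∏ i, g (σ (e i)) = ∏ i, g (τ (e i))) ↔ g true = g false := by
  constructor
  · intro H
    have := H (fun _ => true) (fun _ => false)
    simp only [prod_const, card_univ] at this
    exact (pow_left_inj₀ (hg true) (hg false) Fintype.card_ne_zero).mp this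
  · intro H σ τ
    have hconst : ∀ s, g s = g true := by
      intro s
      cases s
      · exact H.symm
      · rfl
    simp only [hconst]

section Join

variable {d m : ℕ} (σ : CayleyConf d (m + 1)) (ω : (Fin (m + 2) → Fin d) → Bool)

@[simp]
lemma joinConf_of_lt {k : ℕ} (hk : k < m + 1) (hk' : k < m + 2) (w : Fin (k + 1) → Fin d) :
    joinConf d m σ ω ⟨⟨k, hk'⟩, w⟩ = σ ⟨⟨k, hk⟩, w⟩ := by
  simp only [joinConf, dif_pos hk]

@[simp]
lemma joinConf_last (h : m + 1 < m + 2) (w : Fin (m + 2) → Fin d) :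
    joinConf d m σ ω ⟨⟨m + 1, h⟩, w⟩ = ω w := by
  simp only [joinConf, lt_irrefl, dif_neg, not_false_eq_true]

lemma isingExponent_join (β J : ℝ) (h b : ℕ → ℝ) :
    isingExponent d β J h b (m + 1) (joinConf d m σ ω) =
      isingExponent d β J h b m σ
        + ∑ w : Fin (m + 1) → Fin d,
            (h (m + 1) - b (m + 1)) * spin (σ ⟨⟨m, Nat.lt_succ_self m⟩, w⟩)
        + ∑ u : Fin (m + 2) → Fin d,
            (β * J * spin (σ ⟨⟨m, Nat.lt_succ_self m⟩, Fin.init u⟩) + b (m + 2)) * spin (ω u) := by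
  unfold isingExponent
  rw [Fin.sum_univ_castSucc, Fin.sum_univ_castSucc]
  simp only [Fin.val_castSucc, Fin.val_last, Order.lt_add_one_iff, Order.add_one_le_iff,
    Order.lt_one_iff, lt_add_iff_pos_right, Fin.is_le', Fin.is_lt, joinConf_of_lt, joinConf_last]
  rw [← sum_sum_snoc fun w u =>
      (β * J * spin (σ ⟨⟨m, Nat.lt_succ_self m⟩, w⟩) + b (m + 2)) * spin (ω u),
    ← sum_sum_snoc fun _ u => b (m + 1 + 1) * spin (ω u)]
  simp only [add_mul, sub_mul, sum_add_distrib, sum_sub_distrib, mul_assoc, ← mul_sum]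
  ring

def joinEquiv (d m : ℕ) :
    CayleyConf d (m + 1) × ((Fin (m + 2) → Fin d) → Bool) ≃ CayleyConf d (m + 2) where
  toFun p := joinConf d m p.1 p.2
  invFun τ := (fun v => τ ⟨⟨v.1.1, Nat.lt_succ_of_lt v.1.isLt⟩, v.2⟩,
    fun w => τ ⟨⟨m + 1, Nat.lt_succ_self _⟩, w⟩)
  left_inv p := by
    refine Prod.ext (funext fun ⟨⟨k, hk⟩, w⟩ => ?_) (funext fun w => ?_)
    · simp [hk]
    · simp
  right_inv τ := by
    funext ⟨⟨k, hk⟩, w⟩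
    obtain hkm | rfl : k < m + 1 ∨ k = m + 1 := by omega
    · simp [hkm]
    · simp

end Join

noncomputable def boundaryFactor (d : ℕ) (β J : ℝ) (h b : ℕ → ℝ) (m : ℕ) (s : Bool) : ℝ :=
  Real.exp ((h (m + 1) - b (m + 1)) * spin s) * (2 * Real.cosh (β * J * spin s + b (m + 2))) ^ d

section Boundary

variable (d : ℕ) (β J : ℝ) (h b : ℕ → ℝ) (m : ℕ)

lemma boundaryFactor_pos (s : Bool) : 0 < boundaryFactor d β J h b m s := by
  have := Real.cosh_pos (β * J * spin s + b (m + 2))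
  unfold boundaryFactor
  positivity

lemma boundaryFactor_true_eq_false_iff :
    boundaryFactor d β J h b m true = boundaryFactor d β J h b m false
      ↔ b (m + 1) = h (m + 1) + d * arctanh (Real.tanh (β * J) * Real.tanh (b (m + 2))) := by
  simpa [boundaryFactor, spin] using
    exp_mul_two_cosh_pow_eq_iff d (β * J) (b (m + 2)) (h (m + 1)) (b (m + 1))

lemma sum_exp_isingExponent_join (σ : CayleyConf d (m + 1)) :
    ∑ ω : (Fin (m + 2) → Fin d) → Bool,
        Real.exp (isingExponent d β J h b (m + 1) (joinConf d m σ ω))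
      = Real.exp (isingExponent d β J h b m σ)
          * ∏ w, boundaryFactor d β J h b m (σ ⟨⟨m, Nat.lt_succ_self m⟩, w⟩) := by
  simp_rw [isingExponent_join, Real.exp_add]
  rw [← mul_sum, sum_exp_sum_mul_spin,
    prod_comp_init fun w =>
      2 * Real.cosh (β * J * spin (σ ⟨⟨m, Nat.lt_succ_self m⟩, w⟩) + b (m + 2)),
    Real.exp_sum, mul_assoc, ← prod_mul_distrib, Fintype.card_fin]
  rfl

lemma isingZ_succ :
    isingZ d β J h b (m + 1) = ∑ σ : CayleyConf d (m + 1), Real.exp (isingExponent d β J h b m σ)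
      * ∏ w, boundaryFactor d β J h b m (σ ⟨⟨m, Nat.lt_succ_self m⟩, w⟩) := by
  rw [isingZ, ← (joinEquiv d m).sum_comp, Fintype.sum_prod_type]
  exact sum_congr rfl fun σ _ => sum_exp_isingExponent_join d β J h b m σ

lemma compatible_iff_boundaryFactor_true_eq_false [NeZero d] :
    (∀ σ : CayleyConf d (m + 1), ∑ ω : (Fin (m + 2) → Fin d) → Bool,
        isingMu d β J h b (m + 1) (joinConf d m σ ω) = isingMu d β J h b m σ)
      ↔ boundaryFactor d β J h b m true = boundaryFactor d β J h b m false := by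
  simp_rw [isingMu, ← sum_div, sum_exp_isingExponent_join, isingZ_succ, isingZ]
  rw [forall_mul_div_sum_mul_eq_div_sum_iff (fun _ => Real.exp_pos _)
      (fun _ => prod_pos fun _ _ => boundaryFactor_pos ..),
    forall_prod_comp_eq_iff _ fun s => (boundaryFactor_pos d β J h b m s).le]

end Boundary

theorem compatibility_iff_boundary_recurrence_general
    (d : ℕ) (hd : 2 ≤ d) (β J θ : ℝ)
    (hθ : θ = Real.tanh (β * J)) (h b : ℕ → ℝ) :
    (∀ m : ℕ, ∀ σ : CayleyConf d (m + 1),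
        ∑ ω : (Fin (m + 2) → Fin d) → Bool,
          isingMu d β J h b (m + 1) (joinConf d m σ ω) = isingMu d β J h b m σ)
    ↔ ∀ n : ℕ, 2 ≤ n → b (n - 1) = h (n - 1) + d * arctanh (θ * Real.tanh (b n)) := by
  have : NeZero d := ⟨by omega⟩
  simp_rw [compatible_iff_boundaryFactor_true_eq_false, boundaryFactor_true_eq_false_iff, hθ]
  constructor
  · intro H n hn
    obtain ⟨m, rfl⟩ := Nat.exists_eq_add_of_le' hn
    exact H m
  · intro H m
    exact H (m + 2) (by omega)

/-- the compatibility theorem: the family `(μ_n)_{n ≥ 1}` is compatible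
(for every `n ≥ 2`, summing `μ_n(σ ∨ ω)` over the configurations `ω` on generation `n`
gives `μ_{n-1}(σ)`) if and only if the boundary fields satisfy the recurrence
`b_{n-1} = h_{n-1} + d·arctanh(θ·tanh b_n)` for every `n ≥ 2`, where `θ = tanh(βJ)`. -/
theorem compatibility_iff_boundary_recurrence
    (d : ℕ) (hd : 2 ≤ d) (β J θ : ℝ) (hβ : 0 < β) (hJ : 0 < J)
    (hθ : θ = Real.tanh (β * J)) (h b : ℕ → ℝ) :
    (∀ m : ℕ, ∀ σ : CayleyConf d (m + 1),
        ∑ ω : (Fin (m + 2) → Fin d) → Bool,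
          isingMu d β J h b (m + 1) (joinConf d m σ ω) = isingMu d β J h b m σ)
    ↔ ∀ n : ℕ, 2 ≤ n → b (n - 1) = h (n - 1) + d * arctanh (θ * Real.tanh (b n)) :=
  compatibility_iff_boundary_recurrence_general d hd β J θ hθ h b
end

section
/- For any positive decreasing real sequence (ε_n)_{n≥1} and any n ≥ 1, Σ_{i=1}^n (i·ε_i)² ≤ Σ_{j=1}^n ( Σ_{i=j}^n ε_i )² ≤ Σ_{i=1}^n ((n-i+1)·ε_i)². -/
/-!
Upper bound: the tail sums of a decreasing sequence satisfy `∑_{i=j}^n ε_i ≤ (n-j+1) ε_j`.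
Lower bound: adding `ε_{m+1}` to a tail `S = ∑_{i=j}^m ε_i ≥ (m+1-j) ε_{m+1}` raises its square by
`2 S ε_{m+1} + ε_{m+1}² ≥ (2(m+1-j)+1) ε_{m+1}²`, so `(∑_{i=j}^n ε_i)² ≥ ∑_{i=j}^n (2(i-j)+1) ε_i²`.
Summing over `j` and using `∑_{j=1}^i (2(i-j)+1) = i²` gives `∑_i (i ε_i)²`.
-/

open Finset

theorem sum_Icc_odd_eq_sq (i : ℕ) : ∑ j ∈ Icc 1 i, (2 * ((i : ℝ) - j) + 1) = (i : ℝ) ^ 2 := by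
  induction i with
  | zero => simp
  | succ i ih =>
    rw [sum_Icc_succ_top (by omega)]
    have hshift : ∑ j ∈ Icc 1 i, (2 * (((i + 1 : ℕ) : ℝ) - j) + 1)
        = ∑ j ∈ Icc 1 i, (2 * ((i : ℝ) - j) + 1) + ∑ _j ∈ Icc 1 i, (2 : ℝ) := by
      rw [← sum_add_distrib]; refine sum_congr rfl fun _ _ => ?_; push_cast; ring
    rw [hshift, ih, sum_const, Nat.card_Icc, nsmul_eq_mul]
    push_cast; ring

theorem sum_Icc_le_mul_left {a : ℕ → ℝ} {j n : ℕ} (ha : AntitoneOn a (Set.Icc j n)) (hjn : j ≤ n) :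
    ∑ i ∈ Icc j n, a i ≤ ((n : ℝ) - j + 1) * a j := by
  calc ∑ i ∈ Icc j n, a i ≤ #(Icc j n) • a j :=
        sum_le_card_nsmul _ _ _ fun i hi =>
          ha (Set.left_mem_Icc.2 hjn) (coe_Icc j n ▸ hi) (mem_Icc.1 hi).1
    _ = ((n : ℝ) - j + 1) * a j := by
        rw [Nat.card_Icc, nsmul_eq_mul, Nat.cast_sub (by omega)]; push_cast; ring

theorem sum_odd_mul_sq_le_sq_sum {a : ℕ → ℝ} {j m : ℕ} (ha : AntitoneOn a (Set.Icc j m))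
    (ha₀ : ∀ i ∈ Icc j m, 0 ≤ a i) :
    ∑ i ∈ Icc j m, (2 * ((i : ℝ) - j) + 1) * a i ^ 2 ≤ (∑ i ∈ Icc j m, a i) ^ 2 := by
  rcases lt_or_ge m j with hmj | hjm
  · simp [Icc_eq_empty_of_lt hmj]
  induction m, hjm using Nat.le_induction with
  | base => simp
  | succ m hjm ih =>
    have hsub : Set.Icc j m ⊆ Set.Icc j (m + 1) := Set.Icc_subset_Icc_right m.le_succ
    have hlast : ((m : ℝ) + 1 - j) * a (m + 1) ≤ ∑ i ∈ Icc j m, a i := by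
      calc ((m : ℝ) + 1 - j) * a (m + 1) = #(Icc j m) • a (m + 1) := by
            rw [Nat.card_Icc, nsmul_eq_mul, Nat.cast_sub (by omega)]; push_cast; ring
        _ ≤ ∑ i ∈ Icc j m, a i := card_nsmul_le_sum _ _ _ fun i hi =>
            ha (hsub (coe_Icc j m ▸ hi)) (Set.right_mem_Icc.2 (by omega))
              (by rw [mem_Icc] at hi; omega)
    have ha₀' : 0 ≤ a (m + 1) := ha₀ _ (by rw [mem_Icc]; omega)
    rw [sum_Icc_succ_top (by omega), sum_Icc_succ_top (by omega)]
    have hprev := ih (ha.mono hsub) fun i hi => ha₀ i (by rw [mem_Icc] at hi ⊢; omega)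
    push_cast
    nlinarith [hprev, mul_le_mul_of_nonneg_right hlast ha₀']

theorem sum_sq_mul_le_sum_sq_sum_Icc {a : ℕ → ℝ} {n : ℕ} (ha : AntitoneOn a (Set.Icc 1 n))
    (ha₀ : ∀ i ∈ Icc 1 n, 0 ≤ a i) :
    ∑ i ∈ Icc 1 n, ((i : ℝ) * a i) ^ 2 ≤ ∑ j ∈ Icc 1 n, (∑ i ∈ Icc j n, a i) ^ 2 :=
  calc ∑ i ∈ Icc 1 n, ((i : ℝ) * a i) ^ 2
      = ∑ i ∈ Icc 1 n, ∑ j ∈ Icc 1 i, (2 * ((i : ℝ) - j) + 1) * a i ^ 2 := by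
        refine sum_congr rfl fun i _ => ?_
        rw [← sum_mul, sum_Icc_odd_eq_sq, mul_pow]
    _ = ∑ j ∈ Icc 1 n, ∑ i ∈ Icc j n, (2 * ((i : ℝ) - j) + 1) * a i ^ 2 :=
        sum_comm' fun i j => by simp only [mem_Icc]; omega
    _ ≤ ∑ j ∈ Icc 1 n, (∑ i ∈ Icc j n, a i) ^ 2 := sum_le_sum fun j hj => by
        have hj := mem_Icc.1 hj
        exact sum_odd_mul_sq_le_sq_sum (ha.mono (Set.Icc_subset_Icc_left hj.1))
          fun i hi => ha₀ i (Icc_subset_Icc_left hj.1 hi)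

theorem sum_sq_sum_Icc_le_sum_sq_mul {a : ℕ → ℝ} {n : ℕ} (ha : AntitoneOn a (Set.Icc 1 n))
    (ha₀ : ∀ i ∈ Icc 1 n, 0 ≤ a i) :
    ∑ j ∈ Icc 1 n, (∑ i ∈ Icc j n, a i) ^ 2 ≤ ∑ i ∈ Icc 1 n, (((n : ℝ) - i + 1) * a i) ^ 2 :=
  sum_le_sum fun j hj => by
    have hj := mem_Icc.1 hj
    exact pow_le_pow_left₀ (sum_nonneg fun i hi => ha₀ i (Icc_subset_Icc_left hj.1 hi))
      (sum_Icc_le_mul_left (ha.mono (Set.Icc_subset_Icc_left hj.1)) hj.2) 2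

theorem rearrangement_bounds_general (ε : ℕ → ℝ)
    (hpos : ∀ n, 1 ≤ n → 0 < ε n)
    (hdec : ∀ n, 1 ≤ n → ε (n + 1) ≤ ε n)
    (n : ℕ) :
    (∑ i ∈ Finset.Icc 1 n, ((i : ℝ) * ε i) ^ 2
        ≤ ∑ j ∈ Finset.Icc 1 n, (∑ i ∈ Finset.Icc j n, ε i) ^ 2) ∧
    (∑ j ∈ Finset.Icc 1 n, (∑ i ∈ Finset.Icc j n, ε i) ^ 2
        ≤ ∑ i ∈ Finset.Icc 1 n, (((n : ℝ) - (i : ℝ) + 1) * ε i) ^ 2) := by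
  have hanti : AntitoneOn ε (Set.Icc 1 n) :=
    (antitoneOn_nat_Ici_of_succ_le hdec).mono Set.Icc_subset_Ici_self
  have hnonneg : ∀ i ∈ Icc 1 n, 0 ≤ ε i := fun i hi => (hpos i (mem_Icc.1 hi).1).le
  exact ⟨sum_sq_mul_le_sum_sq_sum_Icc hanti hnonneg, sum_sq_sum_Icc_le_sum_sq_mul hanti hnonneg⟩

/-- for a positive decreasing sequence `(ε_n)_{n≥1}`,
`Σ_{i=1}^n (i ε_i)² ≤ Σ_{j=1}^n (Σ_{i=j}^n ε_i)² ≤ Σ_{i=1}^n ((n-i+1) ε_i)²`. -/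
theorem rearrangement_bounds (ε : ℕ → ℝ)
    (hpos : ∀ n, 1 ≤ n → 0 < ε n)
    (hdec : ∀ n, 1 ≤ n → ε (n + 1) ≤ ε n)
    (n : ℕ) (hn : 1 ≤ n) :
    (∑ i ∈ Finset.Icc 1 n, ((i : ℝ) * ε i) ^ 2
        ≤ ∑ j ∈ Finset.Icc 1 n, (∑ i ∈ Finset.Icc j n, ε i) ^ 2) ∧
    (∑ j ∈ Finset.Icc 1 n, (∑ i ∈ Finset.Icc j n, ε i) ^ 2
        ≤ ∑ i ∈ Finset.Icc 1 n, (((n : ℝ) - (i : ℝ) + 1) * ε i) ^ 2) :=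
  rearrangement_bounds_general ε hpos hdec n
end

section
/- Let d ≥ 2 be an integer and let (ε_n)_{n≥1} be a positive decreasing real sequence such that Σ_{n≥1} d^n·ε_n < ∞. Then sup_{n≥1} Σ_{j=1}^n ( Σ_{i=j}^n ε_i )² < ∞, i.e., the sequence n ↦ Σ_{j=1}^n ( Σ_{i=j}^n ε_i )² converges to a finite limit. -/
/-!
Summability of `dⁿ εₙ` forces `|εₙ| ≤ C d⁻ⁿ`. Hence the inner sums `∑_{i=j}^n εᵢ` are bounded by
`C d⁻ʲ / (1 - d⁻¹)` uniformly in `n` and converge to the tails `∑_{i≥j} εᵢ` as `n → ∞`, so by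
Tannery's theorem the outer sums converge to `∑_{j≥1} (∑_{i≥j} εᵢ)²`.
-/

open Filter Topology Finset

theorem tendsto_sum_range_of_dominated_convergence {G : Type*} [NormedAddCommGroup G]
    [CompleteSpace G] {f : ℕ → ℕ → G} {g : ℕ → G} {bound : ℕ → ℝ} (h_sum : Summable bound)
    (hfg : ∀ j, Tendsto (f · j) atTop (𝓝 (g j))) (h_bound : ∀ n j, ‖f n j‖ ≤ bound j) :
    Tendsto (fun n => ∑ j ∈ range n, f n j) atTop (𝓝 (∑' j, g j)) := by
  refine (tendsto_tsum_of_dominated_convergence (f := fun n => Set.indicator (range n) (f n))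
    h_sum (fun j => ?_) (.of_forall fun n j => ?_)).congr fun n => (sum_eq_tsum_indicator _ _).symm
  · refine (hfg j).congr' ((eventually_gt_atTop j).mono fun n hn => ?_)
    simp [Set.indicator_of_mem, hn]
  · exact (norm_indicator_le_norm_self _ _).trans (h_bound n j)

section

variable {ε : ℕ → ℝ} {C r : ℝ}

theorem exists_abs_le_mul_inv_pow_of_summable {c : ℝ} (hc : 0 < c)
    (h : Summable fun n => c ^ n * ε n) : ∃ C, ∀ n, |ε n| ≤ C * c⁻¹ ^ n := by
  obtain ⟨C, hC⟩ := h.tendsto_atTop_zero.abs.bddAbove_range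
  refine ⟨C, fun n => ?_⟩
  have hcn : 0 < c ^ n := pow_pos hc n
  have hn : |c ^ n * ε n| ≤ C := hC ⟨n, rfl⟩
  rw [abs_mul, abs_of_pos hcn] at hn
  rw [inv_pow, ← div_eq_mul_inv, le_div_iff₀ hcn]
  linarith

theorem summable_of_abs_le_geometric (hr0 : 0 ≤ r) (hr1 : r < 1) (h : ∀ i, |ε i| ≤ C * r ^ i) :
    Summable ε :=
  .of_norm_bounded ((summable_geometric_of_lt_one hr0 hr1).mul_left C) h

theorem abs_sum_Icc_le_of_abs_le_geometric (hr0 : 0 ≤ r) (hr1 : r < 1)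
    (h : ∀ i, |ε i| ≤ C * r ^ i) (j n : ℕ) :
    |∑ i ∈ Icc j n, ε i| ≤ C * r ^ j / (1 - r) := by
  have hC : 0 ≤ C := by simpa using (abs_nonneg _).trans (h 0)
  calc |∑ i ∈ Icc j n, ε i| ≤ ∑ i ∈ Ico j (n + 1), C * r ^ i := by
        rw [Ico_add_one_right_eq_Icc]
        exact (abs_sum_le_sum_abs _ _).trans (sum_le_sum fun i _ => h i)
    _ ≤ C * (r ^ j / (1 - r)) := by
        rw [← mul_sum]
        exact mul_le_mul_of_nonneg_left (geom_sum_Ico_le_of_lt_one hr0 hr1) hC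
    _ = C * r ^ j / (1 - r) := (mul_div_assoc _ _ _).symm

theorem Summable.tendsto_sum_Icc (hε : Summable ε) (j : ℕ) :
    Tendsto (fun n => ∑ i ∈ Icc j n, ε i) atTop (𝓝 (∑' k, ε (j + k))) := by
  simp_rw [← Ico_add_one_right_eq_Icc, sum_Ico_eq_sum_range]
  exact ((hε.comp_injective (add_right_injective j)).hasSum.tendsto_sum_nat).comp
    ((tendsto_sub_atTop_nat j).comp (tendsto_add_atTop_nat 1))

theorem tendsto_sum_Icc_sq_sum_Icc_of_abs_le_geometric (hr0 : 0 ≤ r) (hr1 : r < 1)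
    (h : ∀ i, |ε i| ≤ C * r ^ i) :
    Tendsto (fun n => ∑ j ∈ Icc 1 n, (∑ i ∈ Icc j n, ε i) ^ 2) atTop
      (𝓝 (∑' j, (∑' k, ε (1 + j + k)) ^ 2)) := by
  have hsum_Icc : ∀ (n : ℕ) (u : ℕ → ℝ), ∑ j ∈ Icc 1 n, u j = ∑ j ∈ range n, u (1 + j) := by
    intro n u
    rw [← Ico_add_one_right_eq_Icc, sum_Ico_eq_sum_range, Nat.add_sub_cancel]
  refine (tendsto_sum_range_of_dominated_convergence
    (f := fun n j => (∑ i ∈ Icc (1 + j) n, ε i) ^ 2)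
    (bound := fun j => (C * r ^ (1 + j) / (1 - r)) ^ 2) ?_ (fun j => ?_) (fun n j => ?_)).congr
    fun n => (hsum_Icc n _).symm
  · have hr2 : r ^ 2 < 1 := pow_lt_one₀ hr0 hr1 two_ne_zero
    refine ((summable_geometric_of_lt_one (sq_nonneg r) hr2).mul_left
      ((C * r / (1 - r)) ^ 2)).congr fun j => ?_
    ring
  · exact ((summable_of_abs_le_geometric hr0 hr1 h).tendsto_sum_Icc (1 + j)).pow 2
  · rw [Real.norm_eq_abs, abs_pow]
    exact pow_le_pow_left₀ (abs_nonneg _) (abs_sum_Icc_le_of_abs_le_geometric hr0 hr1 h _ _) 2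

end

theorem summable_geom_implies_condition_general (d : ℕ) (hd : 2 ≤ d) (ε : ℕ → ℝ)
    (hsum : Summable fun n : ℕ => (d : ℝ) ^ n * ε n) :
    ∃ L : ℝ, Filter.Tendsto
      (fun n : ℕ => ∑ j ∈ Finset.Icc 1 n, (∑ i ∈ Finset.Icc j n, ε i) ^ 2)
      Filter.atTop (nhds L) := by
  have hd1 : (1 : ℝ) < d := by exact_mod_cast hd
  obtain ⟨C, hC⟩ := exists_abs_le_mul_inv_pow_of_summable (zero_lt_one.trans hd1) hsum
  exact ⟨_, tendsto_sum_Icc_sq_sum_Icc_of_abs_le_geometric (by positivity)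
    (inv_lt_one_of_one_lt₀ hd1) hC⟩

/-- if `d ≥ 2` and `(ε_n)_{n≥1}` is positive, decreasing and satisfies
`Σ_{n≥1} dⁿ ε_n < ∞`, then `n ↦ Σ_{j=1}^n (Σ_{i=j}^n ε_i)²` converges to a finite limit. -/
theorem summable_geom_implies_condition (d : ℕ) (hd : 2 ≤ d) (ε : ℕ → ℝ)
    (hpos : ∀ n, 1 ≤ n → 0 < ε n)
    (hdec : ∀ n, 1 ≤ n → ε (n + 1) ≤ ε n)
    (hsum : Summable fun n : ℕ => (d : ℝ) ^ n * ε n) :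
    ∃ L : ℝ, Filter.Tendsto
      (fun n : ℕ => ∑ j ∈ Finset.Icc 1 n, (∑ i ∈ Finset.Icc j n, ε i) ^ 2)
      Filter.atTop (nhds L) :=
  summable_geom_implies_condition_general d hd ε hsum
end

section
/- Let γ > 0 and set ε_k = k^{-γ} for k ≥ 1. Then the sequence n ↦ Σ_{j=1}^n ( Σ_{i=j}^n i^{-γ} )² is bounded (equivalently, converges to a finite limit) if and only if γ > 3/2. In particular, at the critical power γ = 3/2 the sequence tends to infinity. -/
/-!
Expanding the square, `∑_j (∑_{i ≥ j} a_i)² = ∑_{i,k} min(i,k) a_i a_k ≤ (∑_i √i a_i)²` for `a ≥ 0`,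
since `min(i,k) ≤ √(ik)`. For `a_i = i^{-γ}` the right-hand side is bounded by the square of the
convergent series `∑ i^{1/2-γ}` when `γ > 3/2`. Conversely, for `γ ≤ 3/2` the tail starting at `j`
already contains `j` terms of size at least `(2j)^{-3/2}`, so its square is at least `1/(8j)`, and
summing over `j ≤ n/2` gives a harmonic lower bound.
-/

open Finset Filter

def sumSqTails {R : Type*} [CommSemiring R] (a : ℕ → R) (n : ℕ) : R :=
  ∑ j ∈ Icc 1 n, (∑ i ∈ Icc j n, a i) ^ 2

theorem sumSqTails_eq_sum_min_mul {R : Type*} [CommSemiring R] (a : ℕ → R) (n : ℕ) :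
    sumSqTails a n = ∑ i ∈ Icc 1 n, ∑ k ∈ Icc 1 n, (min i k : ℕ) * (a i * a k) := by
  simp_rw [sumSqTails, sq, sum_mul_sum, ← sum_product']
  rw [sum_comm' (t' := Icc 1 n ×ˢ Icc 1 n) (s' := fun p => Icc 1 (min p.1 p.2))]
  · simp
  · intro j p
    simp only [mem_Icc, mem_product]
    omega

theorem natCast_min_le_sqrt_mul_sqrt (i k : ℕ) : ((min i k : ℕ) : ℝ) ≤ √i * √k := by
  rw [← Real.sqrt_mul (Nat.cast_nonneg i), Real.le_sqrt (Nat.cast_nonneg _) (by positivity), sq]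
  push_cast
  exact mul_le_mul (min_le_left _ _) (min_le_right _ _) (by positivity) (Nat.cast_nonneg i)

theorem sumSqTails_le_sq_sum_sqrt_mul {a : ℕ → ℝ} (ha : ∀ i, 0 ≤ a i) (n : ℕ) :
    sumSqTails a n ≤ (∑ i ∈ Icc 1 n, √i * a i) ^ 2 := by
  rw [sumSqTails_eq_sum_min_mul, sq, sum_mul_sum]
  refine sum_le_sum fun i _ => sum_le_sum fun k _ => ?_
  calc ((min i k : ℕ) : ℝ) * (a i * a k) ≤ (√i * √k) * (a i * a k) :=
        mul_le_mul_of_nonneg_right (natCast_min_le_sqrt_mul_sqrt i k) (mul_nonneg (ha i) (ha k))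
    _ = √i * a i * (√k * a k) := by ring

theorem bddAbove_sumSqTails_rpow_neg {γ : ℝ} (hγ : 3 / 2 < γ) :
    BddAbove (Set.range (sumSqTails fun i : ℕ => (i : ℝ) ^ (-γ))) := by
  have hsum : Summable fun i : ℕ => (i : ℝ) ^ (1 / 2 - γ) :=
    Real.summable_nat_rpow.mpr (by linarith)
  refine ⟨(∑' i : ℕ, (i : ℝ) ^ (1 / 2 - γ)) ^ 2, ?_⟩
  rintro _ ⟨n, rfl⟩
  have hpartial :
      ∑ i ∈ Icc 1 n, √i * (i : ℝ) ^ (-γ) = ∑ i ∈ Icc 1 n, (i : ℝ) ^ (1 / 2 - γ) := by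
    refine sum_congr rfl fun i hi => ?_
    have hi : (0 : ℝ) < i := Nat.cast_pos.mpr (mem_Icc.1 hi).1
    rw [Real.sqrt_eq_rpow, ← Real.rpow_add hi, one_div, sub_eq_add_neg]
  calc sumSqTails (fun i : ℕ => (i : ℝ) ^ (-γ)) n
      ≤ (∑ i ∈ Icc 1 n, (i : ℝ) ^ (1 / 2 - γ)) ^ 2 := by
        rw [← hpartial]
        exact sumSqTails_le_sq_sum_sqrt_mul (fun i => by positivity) n
    _ ≤ (∑' i : ℕ, (i : ℝ) ^ (1 / 2 - γ)) ^ 2 :=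
        pow_le_pow_left₀ (sum_nonneg fun i _ => by positivity)
          (hsum.sum_le_tsum _ fun i _ => by positivity) 2

theorem one_div_eight_mul_le_sq_sum_Icc_rpow_neg {γ : ℝ} (hγ : γ ≤ 3 / 2) {j n : ℕ}
    (hj : 1 ≤ j) (hjn : 2 * j ≤ n) :
    1 / (8 * j : ℝ) ≤ (∑ i ∈ Icc j n, (i : ℝ) ^ (-γ)) ^ 2 := by
  have hterm : ∀ i ∈ Ico j (2 * j), (2 * j : ℝ) ^ (-(3 / 2 : ℝ)) ≤ (i : ℝ) ^ (-γ) := by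
    intro i hi
    rw [mem_Ico] at hi
    have hi1 : (1 : ℝ) ≤ i := by exact_mod_cast hj.trans hi.1
    calc (2 * j : ℝ) ^ (-(3 / 2 : ℝ)) ≤ (i : ℝ) ^ (-(3 / 2 : ℝ)) :=
          Real.rpow_le_rpow_of_nonpos (by linarith) (by exact_mod_cast hi.2.le) (by norm_num)
      _ ≤ (i : ℝ) ^ (-γ) := Real.rpow_le_rpow_of_exponent_le hi1 (by linarith)
  have hlower : j * (2 * j : ℝ) ^ (-(3 / 2 : ℝ)) ≤ ∑ i ∈ Icc j n, (i : ℝ) ^ (-γ) :=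
    calc j * (2 * j : ℝ) ^ (-(3 / 2 : ℝ))
        = ∑ i ∈ Ico j (2 * j), (2 * j : ℝ) ^ (-(3 / 2 : ℝ)) := by
          rw [sum_const, Nat.card_Ico, show 2 * j - j = j by omega, nsmul_eq_mul]
      _ ≤ ∑ i ∈ Ico j (2 * j), (i : ℝ) ^ (-γ) := sum_le_sum hterm
      _ ≤ ∑ i ∈ Icc j n, (i : ℝ) ^ (-γ) :=
          sum_le_sum_of_subset_of_nonneg
            (Ico_subset_Icc_self.trans (Icc_subset_Icc_right (by omega)))
            fun _ _ _ => by positivity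
  have hsq : (j * (2 * j : ℝ) ^ (-(3 / 2 : ℝ))) ^ 2 = 1 / (8 * j) := by
    rw [mul_pow, ← Real.rpow_mul_natCast (by positivity)]
    norm_num
    field_simp
    ring
  rw [← hsq]
  gcongr

theorem tendsto_sumSqTails_rpow_neg_atTop {γ : ℝ} (hγ : γ ≤ 3 / 2) :
    Tendsto (sumSqTails fun i : ℕ => (i : ℝ) ^ (-γ)) atTop atTop := by
  have hharmonic :
      Tendsto (fun n => 1 / 8 * ∑ i ∈ range (n / 2), 1 / ((i : ℝ) + 1)) atTop atTop :=
    (Real.tendsto_sum_range_one_div_nat_succ_atTop.comp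
      (Nat.tendsto_div_const_atTop two_ne_zero)).const_mul_atTop (by norm_num)
  refine tendsto_atTop_mono (fun n => ?_) hharmonic
  calc 1 / 8 * ∑ i ∈ range (n / 2), 1 / ((i : ℝ) + 1)
      = ∑ j ∈ Icc 1 (n / 2), 1 / (8 * j : ℝ) := by
        rw [mul_sum, ← Ico_add_one_right_eq_Icc, sum_Ico_eq_sum_range, Nat.add_sub_cancel]
        refine sum_congr rfl fun i _ => ?_
        push_cast
        field_simp
        ring
    _ ≤ ∑ j ∈ Icc 1 (n / 2), (∑ i ∈ Icc j n, (i : ℝ) ^ (-γ)) ^ 2 :=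
        sum_le_sum fun j hj => one_div_eight_mul_le_sq_sum_Icc_rpow_neg hγ (mem_Icc.1 hj).1
          (by have := (mem_Icc.1 hj).2; omega)
    _ ≤ sumSqTails (fun i : ℕ => (i : ℝ) ^ (-γ)) n :=
        sum_le_sum_of_subset_of_nonneg (Icc_subset_Icc_right (Nat.div_le_self n 2))
          fun _ _ _ => by positivity

theorem power_law_critical_exponent_general (γ : ℝ) :
    (BddAbove (Set.range fun n : ℕ =>
        ∑ j ∈ Finset.Icc 1 n, (∑ i ∈ Finset.Icc j n, (i : ℝ) ^ (-γ)) ^ 2)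
      ↔ 3 / 2 < γ) ∧
    (γ = 3 / 2 → Filter.Tendsto
      (fun n : ℕ => ∑ j ∈ Finset.Icc 1 n, (∑ i ∈ Finset.Icc j n, (i : ℝ) ^ (-γ)) ^ 2)
      Filter.atTop Filter.atTop) := by
  refine ⟨⟨fun hbdd => ?_, bddAbove_sumSqTails_rpow_neg⟩,
    fun hcrit => tendsto_sumSqTails_rpow_neg_atTop hcrit.le⟩
  by_contra! hγ
  exact not_bddAbove_of_tendsto_atTop (tendsto_sumSqTails_rpow_neg_atTop hγ) hbdd

/-- for `ε_k = k^{-γ}` (`γ > 0`), the sequence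
`n ↦ Σ_{j=1}^n (Σ_{i=j}^n i^{-γ})²` is bounded iff `γ > 3/2`;
in particular at the critical power `γ = 3/2` it tends to infinity. -/
theorem power_law_critical_exponent (γ : ℝ) (hγ : 0 < γ) :
    (BddAbove (Set.range fun n : ℕ =>
        ∑ j ∈ Finset.Icc 1 n, (∑ i ∈ Finset.Icc j n, (i : ℝ) ^ (-γ)) ^ 2)
      ↔ 3 / 2 < γ) ∧
    (γ = 3 / 2 → Filter.Tendsto
      (fun n : ℕ => ∑ j ∈ Finset.Icc 1 n, (∑ i ∈ Finset.Icc j n, (i : ℝ) ^ (-γ)) ^ 2)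
      Filter.atTop Filter.atTop) :=
  power_law_critical_exponent_general γ
end

section
/- Let d ≥ 2 be an integer, θ ∈ (0,1), h_c > 0, and suppose ψ(x) = -h_c + d·arctanh(θ·tanh x) has exactly two fixed points b⁻ < b⁺ with ψ'(b⁺) = 1 and ψ'(b⁻) < 1. Let (ε_n)_{n≥1} be a positive sequence decreasing to 0 such that Σ_{j=1}^n ( Σ_{i=j}^n ε_i )² → ∞ as n → ∞. With ψ̃_{k,n} the perturbed compositions (ψ̃_{n,n}(x) = ψ(x) - ε_n, ψ̃_{k,n}(x) = ψ(ψ̃_{k+1,n}(x)) - ε_k), for every k ≥ 1 and all real x, y, lim_{n→∞} ( ψ̃_{k,n}(x) - ψ̃_{k,n}(y) ) = 0. -/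
open Filter Topology Finset

namespace Real

theorem hasDerivAt_tanh (x : ℝ) : HasDerivAt tanh (1 - tanh x ^ 2) x := by
  have h := (hasDerivAt_sinh x).div (hasDerivAt_cosh x) (cosh_pos x).ne'
  rw [show sinh / cosh = tanh from funext fun y => (tanh_eq_sinh_div_cosh y).symm] at h
  refine h.congr_deriv ?_
  rw [tanh_eq_sinh_div_cosh]
  field_simp

theorem strictMono_tanh : StrictMono tanh :=
  strictMono_of_deriv_pos fun x => by
    rw [(hasDerivAt_tanh x).deriv]
    linarith [tanh_sq_lt_one x]

theorem tanh_abs_sq (x : ℝ) : tanh |x| ^ 2 = tanh x ^ 2 := by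
  rcases abs_choice x with h | h <;> simp [h, tanh_neg]

theorem tanh_nonneg {x : ℝ} (hx : 0 ≤ x) : 0 ≤ tanh x := by
  simpa using strictMono_tanh.monotone hx

theorem tanh_sq_le_tanh_sq {x y : ℝ} (h : |x| ≤ |y|) : tanh x ^ 2 ≤ tanh y ^ 2 := by
  rw [← tanh_abs_sq, ← tanh_abs_sq y]
  exact pow_le_pow_left₀ (tanh_nonneg (abs_nonneg x)) (strictMono_tanh.monotone h) 2

theorem tanh_sq_lt_tanh_sq {x y : ℝ} (h : |x| < |y|) : tanh x ^ 2 < tanh y ^ 2 := by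
  rw [← tanh_abs_sq, ← tanh_abs_sq y]
  exact pow_lt_pow_left₀ (strictMono_tanh h) (tanh_nonneg (abs_nonneg x)) two_ne_zero

theorem one_sub_tanh_sq_mul_sub_le {z b : ℝ} (hz : 0 ≤ z) (hzb : z ≤ b) :
    (1 - tanh b ^ 2) * (b - z) ≤ tanh b - tanh z := by
  have hdiff : Differentiable ℝ tanh := fun x => (hasDerivAt_tanh x).differentiableAt
  refine (convex_Icc z b).mul_sub_le_image_sub_of_le_deriv hdiff.continuous.continuousOn
    hdiff.differentiableOn (fun x hx => ?_) z (Set.left_mem_Icc.2 hzb) b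
    (Set.right_mem_Icc.2 hzb) hzb
  rw [interior_Icc] at hx
  rw [(hasDerivAt_tanh x).deriv]
  have : |x| ≤ |b| := by
    rw [abs_of_pos (hz.trans_lt hx.1), abs_of_pos (hz.trans_lt (hx.1.trans hx.2))]
    exact hx.2.le
  linarith [tanh_sq_le_tanh_sq this]

end Real

theorem hasDerivAt_arctanh {u : ℝ} (hu : u ∈ Set.Ioo (-1) 1) :
    HasDerivAt arctanh (1 - u ^ 2)⁻¹ u := by
  obtain ⟨h1, h2⟩ := hu
  have h := ((((hasDerivAt_id' u).const_add 1).div ((hasDerivAt_id' u).const_sub 1)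
    (by linarith)).log (div_pos (by linarith) (by linarith)).ne').const_mul (1 / 2)
  refine h.congr_deriv ?_
  have : 1 - u ≠ 0 := by linarith
  have : 1 + u ≠ 0 := by linarith
  have : 1 - u ^ 2 ≠ 0 := by nlinarith
  simp only [Pi.div_apply]
  field_simp
  ring

theorem arctanh_le_arctanh {u v : ℝ} (hu : -1 < u) (hv : v < 1) (huv : u ≤ v) :
    arctanh u ≤ arctanh v := by
  rw [arctanh, arctanh, ← Real.artanh_eq_half_log ⟨hu.le, by linarith⟩,
    ← Real.artanh_eq_half_log ⟨by linarith, hv.le⟩]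
  exact Real.artanh_le_artanh hu hv huv

theorem mul_sq_le_sub_of_le_deriv {f f' : ℝ → ℝ} {b c z₀ : ℝ} (hf : ∀ x, HasDerivAt f (f' x) x)
    (hb : f b = b) (hf' : ∀ x ∈ Set.Ioo z₀ b, 1 + 2 * c * (b - x) ≤ f' x) {z : ℝ}
    (hz : z ∈ Set.Icc z₀ b) : c * (b - z) ^ 2 ≤ z - f z := by
  set g := fun x => x - f x - c * (b - x) ^ 2
  have hg : ∀ x, HasDerivAt g (1 - f' x + 2 * c * (b - x)) x := fun x => by
    have := ((hasDerivAt_id' x).sub (hf x)).sub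
      ((((hasDerivAt_id' x).const_sub b).pow 2).const_mul c)
    exact this.congr_deriv (by norm_num; ring)
  have hgd : Differentiable ℝ g := fun x => (hg x).differentiableAt
  have hanti : AntitoneOn g (Set.Icc z₀ b) :=
    antitoneOn_of_deriv_nonpos (convex_Icc _ _) hgd.continuous.continuousOn hgd.differentiableOn
      fun x hx => by
        rw [interior_Icc] at hx
        rw [(hg x).deriv]
        linarith [hf' x hx]
  have := hanti hz (Set.right_mem_Icc.2 (hz.1.trans hz.2)) hz.2
  simp only [g, hb, sub_self] at this
  linarith

noncomputable def boundaryFieldMap (d θ h x : ℝ) : ℝ := -h + d * arctanh (θ * Real.tanh x)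

noncomputable def boundaryFieldMapDeriv (d θ x : ℝ) : ℝ :=
  d * θ * (1 - Real.tanh x ^ 2) / (1 - θ ^ 2 * Real.tanh x ^ 2)

section BoundaryFieldMap

open Real

variable {d θ h : ℝ}

theorem one_sub_sq_mul_tanh_sq_pos (hθ : θ ^ 2 ≤ 1) (x : ℝ) : 0 < 1 - θ ^ 2 * tanh x ^ 2 := by
  nlinarith [tanh_sq_lt_one x, sq_nonneg (tanh x)]

theorem hasDerivAt_boundaryFieldMap (hθ : θ ^ 2 ≤ 1) (x : ℝ) :
    HasDerivAt (boundaryFieldMap d θ h) (boundaryFieldMapDeriv d θ x) x := by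
  have hu : θ * tanh x ∈ Set.Ioo (-1) 1 := by
    rw [Set.mem_Ioo, ← abs_lt, ← sq_lt_one_iff_abs_lt_one]
    nlinarith [one_sub_sq_mul_tanh_sq_pos hθ x]
  have hinner := (hasDerivAt_arctanh hu).comp x ((hasDerivAt_tanh x).const_mul θ)
  refine ((hinner.const_mul d).const_add (-h)).congr_deriv ?_
  have := (one_sub_sq_mul_tanh_sq_pos hθ x).ne'
  rw [boundaryFieldMapDeriv]
  field_simp

theorem boundaryFieldMap_zero : boundaryFieldMap d θ h 0 = -h := by
  simp [boundaryFieldMap, arctanh]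

theorem boundaryFieldMap_mem_Icc (hd : 0 ≤ d) (hθ : θ ∈ Set.Ico 0 1) (x : ℝ) :
    boundaryFieldMap d θ h x ∈ Set.Icc (-h + d * arctanh (-θ)) (-h + d * arctanh θ) := by
  obtain ⟨hθ0, hθ1⟩ := hθ
  have hlo : -θ ≤ θ * tanh x := by nlinarith [neg_one_lt_tanh x]
  have hhi : θ * tanh x ≤ θ := by nlinarith [tanh_lt_one x]
  constructor <;> rw [boundaryFieldMap] <;> gcongr
  exacts [arctanh_le_arctanh (by linarith) (by linarith) hlo,
    arctanh_le_arctanh (by linarith) (by linarith) hhi]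

theorem boundaryFieldMapDeriv_sub (hθ : θ ^ 2 ≤ 1) (x y : ℝ) :
    boundaryFieldMapDeriv d θ x - boundaryFieldMapDeriv d θ y =
      d * θ * (1 - θ ^ 2) * (tanh y ^ 2 - tanh x ^ 2) /
        ((1 - θ ^ 2 * tanh x ^ 2) * (1 - θ ^ 2 * tanh y ^ 2)) := by
  rw [boundaryFieldMapDeriv, boundaryFieldMapDeriv,
    div_sub_div _ _ (one_sub_sq_mul_tanh_sq_pos hθ x).ne' (one_sub_sq_mul_tanh_sq_pos hθ y).ne']
  ring

theorem boundaryFieldMapDeriv_nonneg (hd : 0 ≤ d) (hθ : 0 ≤ θ) (hθ1 : θ ^ 2 ≤ 1) (x : ℝ) :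
    0 ≤ boundaryFieldMapDeriv d θ x :=
  div_nonneg (mul_nonneg (mul_nonneg hd hθ) (by linarith [tanh_sq_lt_one x]))
    (one_sub_sq_mul_tanh_sq_pos hθ1 x).le

theorem boundaryFieldMapDeriv_le_of_abs_le (hdθ : 0 ≤ d * θ) (hθ : θ ^ 2 ≤ 1) {x y : ℝ}
    (hxy : |x| ≤ |y|) : boundaryFieldMapDeriv d θ y ≤ boundaryFieldMapDeriv d θ x := by
  rw [← sub_nonneg, boundaryFieldMapDeriv_sub hθ]
  have := one_sub_sq_mul_tanh_sq_pos hθ x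
  have := one_sub_sq_mul_tanh_sq_pos hθ y
  have := tanh_sq_le_tanh_sq hxy
  have : 0 ≤ 1 - θ ^ 2 := by linarith
  positivity

theorem boundaryFieldMapDeriv_lt_of_abs_lt (hdθ : 0 < d * θ) (hθ : θ ^ 2 < 1) {x y : ℝ}
    (hxy : |x| < |y|) : boundaryFieldMapDeriv d θ y < boundaryFieldMapDeriv d θ x := by
  rw [← sub_pos, boundaryFieldMapDeriv_sub hθ.le]
  have := one_sub_sq_mul_tanh_sq_pos hθ.le x
  have := one_sub_sq_mul_tanh_sq_pos hθ.le y
  have := sub_pos.2 (tanh_sq_lt_tanh_sq hxy)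
  have := sub_pos.2 hθ
  positivity

theorem add_mul_sub_le_boundaryFieldMapDeriv (hdθ : 0 ≤ d * θ) (hθ : θ ^ 2 ≤ 1) {z b : ℝ}
    (hz : 0 ≤ z) (hzb : z ≤ b) :
    boundaryFieldMapDeriv d θ b + d * θ * (1 - θ ^ 2) * tanh b * (1 - tanh b ^ 2) * (b - z) ≤
      boundaryFieldMapDeriv d θ z := by
  have htz := tanh_nonneg hz
  have htzb : tanh z ≤ tanh b := strictMono_tanh.monotone hzb
  have hK : 0 ≤ d * θ * (1 - θ ^ 2) := mul_nonneg hdθ (by linarith)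
  have hsq : tanh b * (1 - tanh b ^ 2) * (b - z) ≤ tanh b ^ 2 - tanh z ^ 2 := by
    nlinarith [one_sub_tanh_sq_mul_sub_le hz hzb]
  have hPz := one_sub_sq_mul_tanh_sq_pos hθ z
  have hPb := one_sub_sq_mul_tanh_sq_pos hθ b
  have hP1 : (1 - θ ^ 2 * tanh z ^ 2) * (1 - θ ^ 2 * tanh b ^ 2) ≤ 1 := by
    nlinarith [mul_nonneg (sq_nonneg θ) (sq_nonneg (tanh z)),
      mul_nonneg (sq_nonneg θ) (sq_nonneg (tanh b))]
  have hdiff : d * θ * (1 - θ ^ 2) * (tanh b ^ 2 - tanh z ^ 2) ≤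
      boundaryFieldMapDeriv d θ z - boundaryFieldMapDeriv d θ b := by
    rw [boundaryFieldMapDeriv_sub hθ]
    exact le_div_self (mul_nonneg hK (by nlinarith)) (mul_pos hPz hPb) hP1
  nlinarith [mul_le_mul_of_nonneg_left hsq hK]

theorem differentiable_boundaryFieldMap (hθ : θ ^ 2 ≤ 1) :
    Differentiable ℝ (boundaryFieldMap d θ h) :=
  fun x => (hasDerivAt_boundaryFieldMap hθ x).differentiableAt

theorem monotone_boundaryFieldMap (hd : 0 ≤ d) (hθ : 0 ≤ θ) (hθ1 : θ ^ 2 ≤ 1) :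
    Monotone (boundaryFieldMap d θ h) :=
  monotone_of_deriv_nonneg (differentiable_boundaryFieldMap hθ1) fun x => by
    rw [(hasDerivAt_boundaryFieldMap hθ1 x).deriv]
    exact boundaryFieldMapDeriv_nonneg hd hθ hθ1 x

theorem boundaryFieldMap_sub_le (hdθ : 0 ≤ d * θ) (hθ : θ ^ 2 ≤ 1) {a x y : ℝ} (ha : a ≤ 0)
    (hxy : x ≤ y) (hya : y ≤ a) :
    boundaryFieldMap d θ h y - boundaryFieldMap d θ h x ≤
      boundaryFieldMapDeriv d θ a * (y - x) := by
  have hf := differentiable_boundaryFieldMap (d := d) (h := h) hθ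
  have hderiv : ∀ z ∈ interior (Set.Iic a),
      deriv (boundaryFieldMap d θ h) z ≤ boundaryFieldMapDeriv d θ a := fun z hz => by
    rw [interior_Iic] at hz
    rw [(hasDerivAt_boundaryFieldMap hθ z).deriv]
    refine boundaryFieldMapDeriv_le_of_abs_le hdθ hθ ?_
    rw [abs_of_nonpos ha, abs_of_neg (lt_of_lt_of_le hz ha)]
    exact neg_le_neg (le_of_lt hz)
  exact (convex_Iic a).image_sub_le_mul_sub_of_deriv_le hf.continuous.continuousOn
    hf.differentiableOn hderiv x (hxy.trans hya) y hya hxy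

theorem neg_of_boundaryFieldMapDeriv_lt (hdθ : 0 < d * θ) (hθ : θ ^ 2 < 1) {a b : ℝ}
    (hab : a < b) (ha : boundaryFieldMapDeriv d θ a < 1) (hb : boundaryFieldMapDeriv d θ b = 1) :
    a < 0 := by
  by_contra! h0
  have : |a| < |b| := by rwa [abs_of_nonneg h0, abs_of_nonneg (h0.trans hab.le)]
  linarith [boundaryFieldMapDeriv_lt_of_abs_lt hdθ hθ this]

theorem pos_of_boundaryFieldMap_eq_self (hdθ : 0 ≤ d * θ) (hθ : θ ^ 2 ≤ 1) (hh : 0 < h) {b : ℝ}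
    (hfb : boundaryFieldMap d θ h b = b) (hDb : boundaryFieldMapDeriv d θ b = 1) : 0 < b := by
  by_contra! hb0
  have hf := differentiable_boundaryFieldMap (d := d) (h := h) hθ
  have hderiv : ∀ z ∈ interior (Set.Icc b 0), 1 ≤ deriv (boundaryFieldMap d θ h) z :=
    fun z hz => by
      rw [interior_Icc] at hz
      rw [(hasDerivAt_boundaryFieldMap hθ z).deriv, ← hDb]
      refine boundaryFieldMapDeriv_le_of_abs_le hdθ hθ ?_
      rw [abs_of_neg hz.2, abs_of_neg (hz.1.trans hz.2)]
      exact neg_le_neg hz.1.le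
  have := (convex_Icc b 0).mul_sub_le_image_sub_of_le_deriv hf.continuous.continuousOn
    hf.differentiableOn hderiv b (Set.left_mem_Icc.2 hb0) 0 (Set.right_mem_Icc.2 hb0) hb0
  rw [boundaryFieldMap_zero, hfb] at this
  linarith

theorem exists_pos_mul_sq_le_sub_boundaryFieldMap (hdθ : 0 < d * θ) (hθ : θ ^ 2 < 1) {b : ℝ}
    (hb : 0 < b) (hfb : boundaryFieldMap d θ h b = b) (hDb : boundaryFieldMapDeriv d θ b = 1) :
    ∃ c > 0, ∀ z ∈ Set.Icc 0 b, c * (b - z) ^ 2 ≤ z - boundaryFieldMap d θ h z := by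
  refine ⟨d * θ * (1 - θ ^ 2) * tanh b * (1 - tanh b ^ 2) / 2, ?_, fun z hz =>
    mul_sq_le_sub_of_le_deriv (hasDerivAt_boundaryFieldMap hθ.le) hfb (fun x hx => ?_) hz⟩
  · have := strictMono_tanh hb
    rw [tanh_zero] at this
    have := tanh_sq_lt_one b
    have := sub_pos.2 hθ
    positivity
  · have := add_mul_sub_le_boundaryFieldMapDeriv hdθ.le hθ.le hx.1.le hx.2.le
    rw [hDb] at this
    linarith

end BoundaryFieldMap

theorem le_self_of_fixedPoints {f : ℝ → ℝ} {a b M x₀ : ℝ} (hf : Continuous f) (hM : ∀ x, f x ≤ M)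
    (hfix : ∀ x, a < x → f x = x → x = b) (hx₀ : x₀ ∈ Set.Ioo a b) (hfx₀ : f x₀ < x₀)
    {z : ℝ} (hz : a < z) : f z ≤ z := by
  by_contra! hzf
  rcases lt_or_ge z b with hzb | hbz
  · obtain ⟨c, hc, hfc⟩ := exists_mem_uIcc_isFixedPt hf.continuousOn hzf.le hfx₀.le
    rw [Set.mem_uIcc] at hc
    have hcb := hfix c (by rcases hc with ⟨h, -⟩ | ⟨h, -⟩ <;> linarith [hx₀.1]) hfc
    rcases hc with ⟨-, h⟩ | ⟨-, h⟩ <;> linarith [hx₀.2]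
  · have hM1 : f (M + 1) ≤ M + 1 := by linarith [hM (M + 1)]
    obtain ⟨c, hc, hfc⟩ := exists_mem_uIcc_isFixedPt hf.continuousOn hzf.le hM1
    rw [Set.mem_uIcc] at hc
    have hzc : z ≤ c := by rcases hc with ⟨h, -⟩ | ⟨h, h'⟩ <;> linarith [hM z]
    have hcz : c = z := by linarith [hfix c (hz.trans_le hzc) hfc]
    exact hzf.ne' (hcz ▸ hfc)

theorem nonpos_of_le_mul_succ {g : ℕ → ℝ} {q C : ℝ} (hq0 : 0 ≤ q) (hq1 : q < 1)
    (hg : ∀ i, g i ≤ q * g (i + 1)) (hC : ∀ i, g i ≤ C) : g 0 ≤ 0 := by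
  have hpow : ∀ i, g 0 ≤ q ^ i * g i := by
    intro i
    induction i with
    | zero => simp
    | succ i ih =>
      calc g 0 ≤ q ^ i * g i := ih
        _ ≤ q ^ i * (q * g (i + 1)) := mul_le_mul_of_nonneg_left (hg i) (pow_nonneg hq0 i)
        _ = q ^ (i + 1) * g (i + 1) := by ring
  have hlim : Tendsto (fun i => q ^ i * C) atTop (𝓝 0) := by
    simpa using (tendsto_pow_atTop_nhds_zero_of_lt_one hq0 hq1).mul_const C
  exact ge_of_tendsto' hlim fun i =>
    (hpow i).trans (mul_le_mul_of_nonneg_left (hC i) (pow_nonneg hq0 i))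

section PerturbedOrbit

variable {f : ℝ → ℝ} {ε : ℕ → ℝ} {τ : ℕ → ℝ}

def IsPerturbedOrbit (f : ℝ → ℝ) (ε : ℕ → ℝ) (n : ℕ) (U : ℕ → ℝ) : Prop :=
  ∀ k < n, U k = f (U (k + 1)) - ε k

theorem IsPerturbedOrbit.le (hf : Monotone f) {n : ℕ} {U V : ℕ → ℝ}
    (hU : IsPerturbedOrbit f ε n U) (hV : IsPerturbedOrbit f ε n V) (hn : U n ≤ V n) {k : ℕ}
    (hk : k ≤ n) : U k ≤ V k := by
  refine Nat.decreasingInduction (motive := fun k _ => U k ≤ V k) (fun k hk ih => ?_) hn hk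
  rw [hU k hk, hV k hk]
  linarith [hf ih]

-- `ψ̃_{k,n}` with the innermost value `ψ x` replaced by `v`. Setting it to `v - ε k` for `n ≤ k`
-- makes it monotone in `n` on all of `ℕ` when `v` bounds the range of `f`.
def perturbedOrbit (f : ℝ → ℝ) (ε : ℕ → ℝ) (v : ℝ) (k n : ℕ) : ℝ :=
  if k < n then f (perturbedOrbit f ε v (k + 1) n) - ε k else v - ε k
termination_by n - k

theorem perturbedOrbit_of_lt {v : ℝ} {k n : ℕ} (h : k < n) :
    perturbedOrbit f ε v k n = f (perturbedOrbit f ε v (k + 1) n) - ε k := by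
  rw [perturbedOrbit, if_pos h]

theorem perturbedOrbit_of_le {v : ℝ} {k n : ℕ} (h : n ≤ k) :
    perturbedOrbit f ε v k n = v - ε k := by
  rw [perturbedOrbit, if_neg h.not_gt]

theorem isPerturbedOrbit_perturbedOrbit (v : ℝ) (n : ℕ) :
    IsPerturbedOrbit f ε n (perturbedOrbit f ε v · n) :=
  fun _ hk => perturbedOrbit_of_lt hk

theorem IsPerturbedOrbit.le_perturbedOrbit (hf : Monotone f) {n : ℕ} {U : ℕ → ℝ} {v : ℝ}
    (hU : IsPerturbedOrbit f ε n U) (hn : U n ≤ v - ε n) {k : ℕ} (hk : k ≤ n) :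
    U k ≤ perturbedOrbit f ε v k n :=
  hU.le hf (isPerturbedOrbit_perturbedOrbit v n) (by rwa [perturbedOrbit_of_le le_rfl]) hk

theorem IsPerturbedOrbit.perturbedOrbit_le (hf : Monotone f) {n : ℕ} {U : ℕ → ℝ} {v : ℝ}
    (hU : IsPerturbedOrbit f ε n U) (hn : v - ε n ≤ U n) {k : ℕ} (hk : k ≤ n) :
    perturbedOrbit f ε v k n ≤ U k :=
  (isPerturbedOrbit_perturbedOrbit v n).le hf hU (by rwa [perturbedOrbit_of_le le_rfl]) hk

theorem perturbedOrbit_mono (hf : Monotone f) {v w : ℝ} (hvw : v ≤ w) (k n : ℕ) :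
    perturbedOrbit f ε v k n ≤ perturbedOrbit f ε w k n := by
  rcases le_or_gt k n with hk | hk
  · refine (isPerturbedOrbit_perturbedOrbit v n).le_perturbedOrbit hf ?_ hk
    rw [perturbedOrbit_of_le le_rfl]
    linarith
  · rw [perturbedOrbit_of_le hk.le, perturbedOrbit_of_le hk.le]
    linarith

theorem antitone_perturbedOrbit (hf : Monotone f) {v : ℝ} (hv : ∀ x, f x ≤ v) (k : ℕ) :
    Antitone (perturbedOrbit f ε v k) := by
  refine antitone_nat_of_succ_le fun n => ?_
  rcases le_or_gt k n with hk | hk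
  · refine IsPerturbedOrbit.le_perturbedOrbit (U := (perturbedOrbit f ε v · (n + 1))) hf
      (fun j hj => perturbedOrbit_of_lt (hj.trans n.lt_succ_self)) ?_ hk
    rw [perturbedOrbit_of_lt n.lt_succ_self]
    linarith [hv (perturbedOrbit f ε v (n + 1) (n + 1))]
  · rw [perturbedOrbit_of_le hk.le, perturbedOrbit_of_le hk]

theorem monotone_perturbedOrbit (hf : Monotone f) {v : ℝ} (hv : ∀ x, v ≤ f x) (k : ℕ) :
    Monotone (perturbedOrbit f ε v k) := by
  refine monotone_nat_of_le_succ fun n => ?_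
  rcases le_or_gt k n with hk | hk
  · refine IsPerturbedOrbit.perturbedOrbit_le (U := (perturbedOrbit f ε v · (n + 1))) hf
      (fun j hj => perturbedOrbit_of_lt (hj.trans n.lt_succ_self)) ?_ hk
    rw [perturbedOrbit_of_lt n.lt_succ_self]
    linarith [hv (perturbedOrbit f ε v (n + 1) (n + 1))]
  · rw [perturbedOrbit_of_le hk.le, perturbedOrbit_of_le hk]

theorem sub_le_perturbedOrbit {m v : ℝ} (hm : ∀ x, m ≤ f x) (hmv : m ≤ v) (k n : ℕ) :
    m - ε k ≤ perturbedOrbit f ε v k n := by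
  rw [perturbedOrbit]
  split_ifs
  exacts [by linarith [hm (perturbedOrbit f ε v (k + 1) n)], by linarith]

theorem perturbedOrbit_le_sub {M v : ℝ} (hM : ∀ x, f x ≤ M) (hvM : v ≤ M) (k n : ℕ) :
    perturbedOrbit f ε v k n ≤ M - ε k := by
  rw [perturbedOrbit]
  split_ifs
  exacts [by linarith [hM (perturbedOrbit f ε v (k + 1) n)], by linarith]

theorem eq_of_tendsto_perturbedOrbit (hf : Continuous f) {v : ℝ} {τ : ℕ → ℝ}
    (hτ : ∀ k, Tendsto (perturbedOrbit f ε v k) atTop (𝓝 (τ k))) (k : ℕ) :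
    τ k = f (τ (k + 1)) - ε k := by
  refine tendsto_nhds_unique (hτ k) ((((hf.tendsto _).comp (hτ (k + 1))).sub_const (ε k)).congr' ?_)
  filter_upwards [eventually_gt_atTop k] with n hn
  exact (perturbedOrbit_of_lt hn).symm

theorem eq_of_contraction {a q m M : ℝ} {β : ℕ → ℝ} (hm : ∀ x, m ≤ f x) (hM : ∀ x, f x ≤ M)
    (hcontr : ∀ x y, x ≤ y → y ≤ a → f y - f x ≤ q * (y - x)) (hq0 : 0 ≤ q) (hq1 : q < 1)
    (hτ : ∀ j, τ j = f (τ (j + 1)) - ε j) (hβ : ∀ j, β j = f (β (j + 1)) - ε j) {k : ℕ}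
    (hβτ : ∀ j, k ≤ j → β j ≤ τ j) (hτa : ∀ j, k ≤ j → τ j ≤ a) : τ k = β k := by
  have hgap : τ (k + 0) - β (k + 0) ≤ 0 := by
    refine nonpos_of_le_mul_succ (g := fun i => τ (k + i) - β (k + i)) (C := M - m) hq0 hq1
      (fun i => ?_) (fun i => ?_)
    · rw [hτ (k + i), hβ (k + i), ← add_assoc]
      linarith [hcontr _ _ (hβτ (k + i + 1) (by omega)) (hτa (k + i + 1) (by omega))]
    · rw [hτ (k + i), hβ (k + i)]
      linarith [hM (τ (k + i + 1)), hm (β (k + i + 1))]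
  simp only [add_zero] at hgap
  linarith [hβτ k le_rfl]

theorem tendsto_fixedPoint_of_lt {a b M : ℝ} (hf_mono : Monotone f) (hf : Continuous f)
    (hM : ∀ x, f x ≤ M) (ha : f a = a) (hfix : ∀ x, a < x → f x = x → x = b)
    (hsign : ∀ z, a < z → f z ≤ z) (hε : ∀ i, 1 ≤ i → 0 ≤ ε i) (hlim : Tendsto ε atTop (𝓝 0))
    (hτ : ∀ j, τ j = f (τ (j + 1)) - ε j) {j₀ : ℕ} (hj₀ : 1 ≤ j₀) (haτ : a < τ j₀) :
    (∀ j, j₀ ≤ j → τ j ≤ b) ∧ Tendsto τ atTop (𝓝 b) := by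
  have hup : ∀ j, j₀ ≤ j → a < τ j := by
    intro j hj
    induction j, hj using Nat.le_induction with
    | base => exact haτ
    | succ j hj ih =>
      by_contra! h
      have := hf_mono h
      rw [ha] at this
      linarith [hτ j, hε j (hj₀.trans hj)]
  have hmono : Monotone fun i => τ (j₀ + i) := monotone_nat_of_le_succ fun i => by
    show τ (j₀ + i) ≤ τ (j₀ + i + 1)
    linarith [hsign _ (hup (j₀ + i + 1) (by omega)), hτ (j₀ + i), hε (j₀ + i) (by omega)]
  have hbdd : BddAbove (Set.range fun i => τ (j₀ + i)) := ⟨M, by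
    rintro _ ⟨i, rfl⟩
    linarith [hτ (j₀ + i), hM (τ (j₀ + i + 1)), hε (j₀ + i) (by omega)]⟩
  have hL : Tendsto τ atTop (𝓝 (⨆ i, τ (j₀ + i))) := by
    rw [← tendsto_add_atTop_iff_nat j₀]
    simpa only [add_comm] using tendsto_atTop_ciSup hmono hbdd
  have hle : ∀ j, j₀ ≤ j → τ j ≤ ⨆ i, τ (j₀ + i) := fun j hj => by
    simpa [Nat.add_sub_cancel' hj] using le_ciSup hbdd (j - j₀)
  generalize ⨆ i, τ (j₀ + i) = L at hL hle
  have hfL : f L = L := by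
    have h := ((hf.tendsto L).comp ((tendsto_add_atTop_iff_nat 1).2 hL)).sub hlim
    rw [sub_zero] at h
    exact tendsto_nhds_unique (h.congr fun j => (hτ j).symm) hL
  obtain rfl := hfix L (haτ.trans_le (hle j₀ le_rfl)) hfL
  exact ⟨hle, hL⟩

theorem not_tendsto_sum_sq_tail_atTop {b c z₀ : ℝ} (hc : 0 < c)
    (hquad : ∀ z ∈ Set.Icc z₀ b, c * (b - z) ^ 2 ≤ z - f z) (hε : ∀ i, 1 ≤ i → 0 ≤ ε i)
    (hτ : ∀ j, τ j = f (τ (j + 1)) - ε j) (hev : ∀ᶠ j in atTop, τ j ∈ Set.Icc z₀ b) :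
    ¬ Tendsto (fun n => ∑ j ∈ Icc 1 n, (∑ i ∈ Icc j n, ε i) ^ 2) atTop atTop := by
  obtain ⟨J, hJ⟩ := eventually_atTop.1 (hev.and (eventually_ge_atTop 1))
  have hJ1 : 1 ≤ J := (hJ J le_rfl).2
  -- each step gains `ε i + c (b - τ (i + 1)) ^ 2`, and `τ` increases by at most `b - z₀`
  have hsum : ∀ j n, J ≤ j → j ≤ n →
      ∑ i ∈ Ico j n, ε i + c * ∑ i ∈ Ico j n, (b - τ (i + 1)) ^ 2 ≤ τ n - τ j := by
    intro j n hj hjn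
    rw [mul_sum, ← sum_add_distrib, ← sum_Ico_sub τ hjn]
    refine sum_le_sum fun i hi => ?_
    have hi := (mem_Ico.1 hi).1
    linarith [hτ i, hquad _ (hJ (i + 1) (by omega)).1]
  have hnonneg : ∀ j n, 1 ≤ j → 0 ≤ ∑ i ∈ Ico j n, ε i := fun j n hj =>
    sum_nonneg fun i hi => hε i (hj.trans (mem_Ico.1 hi).1)
  have hsq_nonneg : ∀ j n, 0 ≤ c * ∑ i ∈ Ico j n, (b - τ (i + 1)) ^ 2 := fun j n =>
    mul_nonneg hc.le (sum_nonneg fun i _ => sq_nonneg _)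
  have htail : ∀ j n, J ≤ j → j ≤ n → ∑ i ∈ Ico j n, ε i ≤ b - τ j := fun j n hj hjn => by
    linarith [hsum j n hj hjn, hsq_nonneg j n, (hJ n (hj.trans hjn)).1.2]
  have hsq : ∀ n, J ≤ n → ∑ i ∈ Ico J n, (b - τ (i + 1)) ^ 2 ≤ (b - z₀) / c := fun n hn => by
    rw [le_div_iff₀ hc]
    linarith [hsum J n le_rfl hn, hnonneg J n hJ1, (hJ n hn).1.2, (hJ J le_rfl).1.1]
  obtain ⟨C, hbound⟩ : ∃ C, ∀ n, J ≤ n → ∑ j ∈ Icc 1 n, (∑ i ∈ Icc j n, ε i) ^ 2 ≤ C := by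
    refine ⟨∑ j ∈ Ico 1 (J + 1), (∑ i ∈ Ico j (J + 1), ε i + (b - z₀)) ^ 2 + (b - z₀) / c,
      fun n hn => ?_⟩
    simp_rw [← Ico_add_one_right_eq_Icc]
    rw [← sum_Ico_consecutive _ (show 1 ≤ J + 1 by omega) (show J + 1 ≤ n + 1 by omega)]
    refine add_le_add (sum_le_sum fun j hj => ?_) ?_
    · obtain ⟨hj1, hjJ⟩ := mem_Ico.1 hj
      rw [← sum_Ico_consecutive _ (show j ≤ J + 1 by omega) (show J + 1 ≤ n + 1 by omega)]
      have := hnonneg j (J + 1) hj1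
      have := hnonneg (J + 1) (n + 1) (by omega)
      have := htail (J + 1) (n + 1) (by omega) (by omega)
      have := (hJ (J + 1) (by omega)).1.1
      exact pow_le_pow_left₀ (by linarith) (by linarith) 2
    · calc ∑ j ∈ Ico (J + 1) (n + 1), (∑ i ∈ Ico j (n + 1), ε i) ^ 2
          ≤ ∑ j ∈ Ico (J + 1) (n + 1), (b - τ j) ^ 2 := sum_le_sum fun j hj => by
            obtain ⟨hj1, hjn⟩ := mem_Ico.1 hj
            exact pow_le_pow_left₀ (hnonneg j _ (by omega)) (htail j _ (by omega) (by omega)) 2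
        _ = ∑ i ∈ Ico J n, (b - τ (i + 1)) ^ 2 := (sum_Ico_add' (fun j => (b - τ j) ^ 2) J n 1).symm
        _ ≤ (b - z₀) / c := hsq n hn
  intro h
  obtain ⟨n, hn, hJn⟩ := ((h.eventually_gt_atTop C).and (eventually_ge_atTop J)).exists
  exact (hbound n hJn).not_gt hn

theorem le_of_tendsto_sum_sq_tail_atTop {a b c z₀ M : ℝ} (hf_mono : Monotone f)
    (hf : Continuous f) (hM : ∀ x, f x ≤ M) (ha : f a = a) (hfix : ∀ x, a < x → f x = x → x = b)
    (hsign : ∀ z, a < z → f z ≤ z) (hc : 0 < c) (hz₀ : z₀ < b)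
    (hquad : ∀ z ∈ Set.Icc z₀ b, c * (b - z) ^ 2 ≤ z - f z) (hε : ∀ i, 1 ≤ i → 0 ≤ ε i)
    (hlim : Tendsto ε atTop (𝓝 0))
    (hdiv : Tendsto (fun n => ∑ j ∈ Icc 1 n, (∑ i ∈ Icc j n, ε i) ^ 2) atTop atTop)
    (hτ : ∀ j, τ j = f (τ (j + 1)) - ε j) {j : ℕ} (hj : 1 ≤ j) : τ j ≤ a := by
  by_contra! haτ
  obtain ⟨hle, hτb⟩ := tendsto_fixedPoint_of_lt hf_mono hf hM ha hfix hsign hε hlim hτ hj haτ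
  refine not_tendsto_sum_sq_tail_atTop hc hquad hε hτ ?_ hdiv
  filter_upwards [hτb.eventually (lt_mem_nhds hz₀), eventually_ge_atTop j] with i h₁ h₂
  exact ⟨h₁.le, hle i h₂⟩

theorem tendsto_perturbedOrbit_sub_perturbedOrbit {a b c q z₀ m M : ℝ} (hf_mono : Monotone f)
    (hf : Continuous f) (hm : ∀ x, m ≤ f x) (hM : ∀ x, f x ≤ M) (ha : f a = a)
    (hfix : ∀ x, a < x → f x = x → x = b) (hsign : ∀ z, a < z → f z ≤ z)
    (hcontr : ∀ x y, x ≤ y → y ≤ a → f y - f x ≤ q * (y - x)) (hq : q < 1) (hc : 0 < c)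
    (hz₀ : z₀ < b) (hquad : ∀ z ∈ Set.Icc z₀ b, c * (b - z) ^ 2 ≤ z - f z)
    (hε : ∀ i, 1 ≤ i → 0 ≤ ε i) (hlim : Tendsto ε atTop (𝓝 0))
    (hdiv : Tendsto (fun n => ∑ j ∈ Icc 1 n, (∑ i ∈ Icc j n, ε i) ^ 2) atTop atTop)
    {k : ℕ} (hk : 1 ≤ k) :
    Tendsto (fun n => perturbedOrbit f ε M k n - perturbedOrbit f ε m k n) atTop (𝓝 0) := by
  have hmM : m ≤ M := (hm 0).trans (hM 0)
  have hq0 : 0 ≤ q := by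
    have := hcontr (a - 1) a (by linarith) le_rfl
    have := hf_mono (show a - 1 ≤ a by linarith)
    nlinarith
  obtain ⟨τ, hT⟩ : ∃ τ : ℕ → ℝ, ∀ j, Tendsto (perturbedOrbit f ε M j) atTop (𝓝 (τ j)) :=
    ⟨_, fun j => tendsto_atTop_ciInf (antitone_perturbedOrbit hf_mono hM j)
      ⟨m - ε j, by rintro _ ⟨n, rfl⟩; exact sub_le_perturbedOrbit hm hmM j n⟩⟩
  obtain ⟨β, hB⟩ : ∃ β : ℕ → ℝ, ∀ j, Tendsto (perturbedOrbit f ε m j) atTop (𝓝 (β j)) :=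
    ⟨_, fun j => tendsto_atTop_ciSup (monotone_perturbedOrbit hf_mono hm j)
      ⟨M - ε j, by rintro _ ⟨n, rfl⟩; exact perturbedOrbit_le_sub hM hmM j n⟩⟩
  have hτ := eq_of_tendsto_perturbedOrbit hf hT
  have hβτ : ∀ j, β j ≤ τ j := fun j =>
    le_of_tendsto_of_tendsto' (hB j) (hT j) (perturbedOrbit_mono hf_mono hmM j)
  have hτa : ∀ j, k ≤ j → τ j ≤ a := fun j hj =>
    le_of_tendsto_sum_sq_tail_atTop hf_mono hf hM ha hfix hsign hc hz₀ hquad hε hlim hdiv hτ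
      (hk.trans hj)
  have hτβ := eq_of_contraction hm hM hcontr hq0 hq hτ (eq_of_tendsto_perturbedOrbit hf hB)
    (fun j _ => hβτ j) hτa
  simpa [hτβ] using (hT k).sub (hB k)

theorem tendsto_perturbedComposition_sub {a b c q z₀ m M : ℝ} (hf_mono : Monotone f)
    (hf : Continuous f) (hm : ∀ x, m ≤ f x) (hM : ∀ x, f x ≤ M) (ha : f a = a)
    (hfix : ∀ x, a < x → f x = x → x = b) (hsign : ∀ z, a < z → f z ≤ z)
    (hcontr : ∀ x y, x ≤ y → y ≤ a → f y - f x ≤ q * (y - x)) (hq : q < 1) (hc : 0 < c)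
    (hz₀ : z₀ < b) (hquad : ∀ z ∈ Set.Icc z₀ b, c * (b - z) ^ 2 ≤ z - f z)
    (hε : ∀ i, 1 ≤ i → 0 ≤ ε i) (hlim : Tendsto ε atTop (𝓝 0))
    (hdiv : Tendsto (fun n => ∑ j ∈ Icc 1 n, (∑ i ∈ Icc j n, ε i) ^ 2) atTop atTop)
    {Ψ : ℕ → ℕ → ℝ → ℝ} (hdiag : ∀ n x, Ψ n n x = f x - ε n)
    (hrec : ∀ k n, k < n → ∀ x, Ψ k n x = f (Ψ (k + 1) n x) - ε k) :
    ∀ k, 1 ≤ k → ∀ x y : ℝ, Tendsto (fun n => Ψ k n x - Ψ k n y) atTop (𝓝 0) := by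
  intro k hk x y
  refine squeeze_zero_norm' ?_ (tendsto_perturbedOrbit_sub_perturbedOrbit hf_mono hf hm hM ha
    hfix hsign hcontr hq hc hz₀ hquad hε hlim hdiv hk)
  filter_upwards [eventually_ge_atTop k] with n hn
  have hU : ∀ z, IsPerturbedOrbit f ε n (Ψ · n z) := fun z j hj => hrec j n hj z
  have hle : ∀ z, Ψ k n z ≤ perturbedOrbit f ε M k n := fun z =>
    (hU z).le_perturbedOrbit hf_mono (by rw [hdiag]; linarith [hM z]) hn
  have hge : ∀ z, perturbedOrbit f ε m k n ≤ Ψ k n z := fun z =>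
    (hU z).perturbedOrbit_le hf_mono (by rw [hdiag]; linarith [hm z]) hn
  rw [Real.norm_eq_abs, abs_sub_le_iff]
  constructor <;> linarith [hle x, hle y, hge x, hge y]

end PerturbedOrbit

theorem perturbed_compositions_forget_boundary_condition_general
    (d : ℕ) (hd : 2 ≤ d) (θ hc : ℝ) (hθ : θ ∈ Set.Ioo (0 : ℝ) 1) (hhc : 0 < hc)
    (ψ : ℝ → ℝ) (hψ : ψ = fun x => -hc + d * arctanh (θ * Real.tanh x))
    (bm bp : ℝ) (hlt : bm < bp)
    (hfix : ∀ x, ψ x = x ↔ x = bm ∨ x = bp)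
    (hsaddle : deriv ψ bp = 1) (hstable : deriv ψ bm < 1)
    (ε : ℕ → ℝ) (hpos : ∀ n, 1 ≤ n → 0 < ε n)
    (hlim : Filter.Tendsto ε Filter.atTop (nhds 0))
    (hdiv : Filter.Tendsto
      (fun n : ℕ => ∑ j ∈ Finset.Icc 1 n, (∑ i ∈ Finset.Icc j n, ε i) ^ 2)
      Filter.atTop Filter.atTop)
    (Ψ : ℕ → ℕ → ℝ → ℝ)
    (hdiag : ∀ n x, Ψ n n x = ψ x - ε n)
    (hrec : ∀ k n, k < n → ∀ x, Ψ k n x = ψ (Ψ (k + 1) n x) - ε k) :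
    ∀ k, 1 ≤ k → ∀ x y : ℝ,
      Filter.Tendsto (fun n => Ψ k n x - Ψ k n y) Filter.atTop (nhds 0) := by
  obtain ⟨hθ0, hθ1⟩ := hθ
  have hθsq : θ ^ 2 < 1 := by nlinarith
  have hdθ : 0 < (d : ℝ) * θ := mul_pos (by exact_mod_cast (by omega : 0 < d)) hθ0
  replace hψ : ψ = boundaryFieldMap d θ hc := hψ
  subst hψ
  rw [(hasDerivAt_boundaryFieldMap hθsq.le bp).deriv] at hsaddle
  rw [(hasDerivAt_boundaryFieldMap hθsq.le bm).deriv] at hstable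
  have hbm : boundaryFieldMap d θ hc bm = bm := (hfix bm).2 (.inl rfl)
  have hbp : boundaryFieldMap d θ hc bp = bp := (hfix bp).2 (.inr rfl)
  have hbm0 := neg_of_boundaryFieldMapDeriv_lt hdθ hθsq hlt hstable hsaddle
  have hbp0 := pos_of_boundaryFieldMap_eq_self hdθ.le hθsq.le hhc hbp hsaddle
  have hbounds := boundaryFieldMap_mem_Icc (h := hc) (Nat.cast_nonneg d) ⟨hθ0.le, hθ1⟩
  have hcont := (differentiable_boundaryFieldMap (d := d) (h := hc) hθsq.le).continuous
  have hfix' : ∀ x, bm < x → boundaryFieldMap d θ hc x = x → x = bp := fun x hx h =>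
    ((hfix x).1 h).resolve_left hx.ne'
  obtain ⟨c, hc0, hquad⟩ := exists_pos_mul_sq_le_sub_boundaryFieldMap hdθ hθsq hbp0 hbp hsaddle
  exact tendsto_perturbedComposition_sub
    (monotone_boundaryFieldMap (Nat.cast_nonneg d) hθ0.le hθsq.le) hcont
    (fun x => (hbounds x).1) (fun x => (hbounds x).2) hbm hfix'
    (fun z => le_self_of_fixedPoints hcont (fun x => (hbounds x).2) hfix' ⟨hbm0, hbp0⟩
      (by rw [boundaryFieldMap_zero]; linarith))
    (fun x y hxy hya => boundaryFieldMap_sub_le hdθ.le hθsq.le hbm0.le hxy hya) hstable hc0 hbp0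
    hquad (fun i hi => (hpos i hi).le) hlim hdiv hdiag hrec

/-- when `Σ_{j=1}^n (Σ_{i=j}^n ε_i)² → ∞`, the perturbed compositions
forget their argument: `ψ̃_{k,n}(x) - ψ̃_{k,n}(y) → 0` for all `x, y`
(uniqueness of the Gibbs measure at the recursion level). -/
theorem perturbed_compositions_forget_boundary_condition
    (d : ℕ) (hd : 2 ≤ d) (θ hc : ℝ) (hθ : θ ∈ Set.Ioo (0 : ℝ) 1) (hhc : 0 < hc)
    (ψ : ℝ → ℝ) (hψ : ψ = fun x => -hc + d * arctanh (θ * Real.tanh x))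
    (bm bp : ℝ) (hlt : bm < bp)
    (hfix : ∀ x, ψ x = x ↔ x = bm ∨ x = bp)
    (hsaddle : deriv ψ bp = 1) (hstable : deriv ψ bm < 1)
    (ε : ℕ → ℝ) (hpos : ∀ n, 1 ≤ n → 0 < ε n)
    (hdec : ∀ n, 1 ≤ n → ε (n + 1) ≤ ε n)
    (hlim : Filter.Tendsto ε Filter.atTop (nhds 0))
    (hdiv : Filter.Tendsto
      (fun n : ℕ => ∑ j ∈ Finset.Icc 1 n, (∑ i ∈ Finset.Icc j n, ε i) ^ 2)
      Filter.atTop Filter.atTop)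
    (Ψ : ℕ → ℕ → ℝ → ℝ)
    (hdiag : ∀ n x, Ψ n n x = ψ x - ε n)
    (hrec : ∀ k n, k < n → ∀ x, Ψ k n x = ψ (Ψ (k + 1) n x) - ε k) :
    ∀ k, 1 ≤ k → ∀ x y : ℝ,
      Filter.Tendsto (fun n => Ψ k n x - Ψ k n y) Filter.atTop (nhds 0) :=
  perturbed_compositions_forget_boundary_condition_general d hd θ hc hθ hhc ψ hψ bm bp hlt hfix
    hsaddle hstable ε hpos hlim hdiv Ψ hdiag hrec
end

section
/- Let d ≥ 1 be an integer, θ ∈ (0,1) with d·θ ≤ 1, and h ∈ ℝ. Then the map ψ(x) = h + d·arctanh(θ·tanh x) has exactly one fixed point in ℝ. -/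
/-!
Writing `tanh = sinh / cosh` gives
`arctanh (θ tanh x) = (log (cosh x + θ sinh x) - log (cosh x - θ sinh x)) / 2`, whose derivative
is `θ / (cosh² x - θ² sinh² x) = θ / (1 + (1 - θ²) sinh² x)`. Hence `ψ' ≤ dθ ≤ 1`, with strict
inequality away from `x = 0`, so `x ↦ x - ψ x` is strictly increasing and `ψ` has at most one
fixed point. Since `|θ tanh x| ≤ θ`, `ψ` stays within `d · arctanh θ` of `h`, and the
intermediate value theorem gives a fixed point.
-/

open Real Set

theorem arctanh_eq_artanh {y : ℝ} (hy : y ∈ Icc (-1) 1) : arctanh y = artanh y :=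
  (artanh_eq_half_log hy).symm

theorem arctanh_neg (y : ℝ) : arctanh (-y) = -arctanh y := by
  rw [arctanh, arctanh, sub_neg_eq_add, ← sub_eq_add_neg, ← inv_div (1 + y), log_inv, mul_neg]

theorem arctanh_le_arctanh_s9 {y z : ℝ} (hy : -1 < y) (hz : z < 1) (hyz : y ≤ z) :
    arctanh y ≤ arctanh z := by
  rw [arctanh_eq_artanh ⟨hy.le, hyz.trans hz.le⟩, arctanh_eq_artanh ⟨hy.le.trans hyz, hz.le⟩]
  exact artanh_le_artanh hy hz hyz

theorem abs_arctanh_le {y r : ℝ} (hyr : |y| ≤ r) (hr : r < 1) : |arctanh y| ≤ arctanh r := by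
  obtain ⟨hry, hyr⟩ := abs_le.1 hyr
  refine abs_le.2 ⟨?_, arctanh_le_arctanh_s9 (by linarith) hr hyr⟩
  rw [← arctanh_neg]
  exact arctanh_le_arctanh_s9 (by linarith) (by linarith) hry

theorem abs_mul_sinh_lt_cosh {θ : ℝ} (hθ : |θ| ≤ 1) (x : ℝ) : |θ * sinh x| < cosh x := by
  have hsinh : |sinh x| < cosh x :=
    abs_lt.2 ⟨by linarith [sinh_neg x ▸ cosh_neg x ▸ sinh_lt_cosh (-x)], sinh_lt_cosh x⟩
  rw [abs_mul]
  exact (mul_le_of_le_one_left (abs_nonneg _) hθ).trans_lt hsinh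

theorem arctanh_mul_tanh {θ : ℝ} (hθ : |θ| ≤ 1) (x : ℝ) :
    arctanh (θ * tanh x) = (log (cosh x + θ * sinh x) - log (cosh x - θ * sinh x)) / 2 := by
  obtain ⟨hplus, hminus⟩ := abs_lt.1 (abs_mul_sinh_lt_cosh hθ x)
  have hc := (cosh_pos x).ne'
  rw [arctanh, tanh_eq_sinh_div_cosh, ← log_div (by linarith) (by linarith)]
  suffices (1 + θ * (sinh x / cosh x)) / (1 - θ * (sinh x / cosh x)) =
      (cosh x + θ * sinh x) / (cosh x - θ * sinh x) by rw [this]; ring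
  field_simp

theorem hasDerivAt_arctanh_mul_tanh {θ : ℝ} (hθ : |θ| ≤ 1) (x : ℝ) :
    HasDerivAt (fun x => arctanh (θ * tanh x)) (θ / (1 + (1 - θ ^ 2) * sinh x ^ 2)) x := by
  have hplus : HasDerivAt (fun y => cosh y + θ * sinh y) (sinh x + θ * cosh x) x :=
    (hasDerivAt_cosh x).add ((hasDerivAt_sinh x).const_mul θ)
  have hminus : HasDerivAt (fun y => cosh y - θ * sinh y) (sinh x - θ * cosh x) x :=
    (hasDerivAt_cosh x).sub ((hasDerivAt_sinh x).const_mul θ)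
  obtain ⟨hlow, hhigh⟩ := abs_lt.1 (abs_mul_sinh_lt_cosh hθ x)
  have hplus_pos : 0 < cosh x + θ * sinh x := by linarith
  have hminus_pos : 0 < cosh x - θ * sinh x := by linarith
  simp only [arctanh_mul_tanh hθ]
  refine (((hplus.log hplus_pos.ne').sub (hminus.log hminus_pos.ne')).div_const 2).congr_deriv ?_
  have hθ2 : θ ^ 2 ≤ 1 := (sq_le_one_iff_abs_le_one θ).2 hθ
  have hD : 0 < 1 + (1 - θ ^ 2) * sinh x ^ 2 := by nlinarith [sq_nonneg (sinh x)]
  rw [div_sub_div _ _ hplus_pos.ne' hminus_pos.ne', div_div, div_eq_div_iff (by positivity) hD.ne']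
  linear_combination (2 * θ * (1 - θ ^ 2) * sinh x ^ 2) * cosh_sq x

theorem strictMono_of_hasDerivAt_pos_of_ne {f f' : ℝ → ℝ} (a : ℝ)
    (hf : ∀ x, HasDerivAt f (f' x) x) (hf' : ∀ x ≠ a, 0 < f' x) : StrictMono f := by
  have hcont : Continuous f := continuous_iff_continuousAt.2 fun x => (hf x).continuousAt
  refine StrictMonoOn.Iic_union_Ici (a := a) ?_ ?_
  · refine strictMonoOn_of_hasDerivWithinAt_pos (convex_Iic a) hcont.continuousOn
      (fun x _ => (hf x).hasDerivWithinAt) fun x hx => hf' x ?_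
    rw [interior_Iic] at hx
    exact hx.ne
  · refine strictMonoOn_of_hasDerivWithinAt_pos (convex_Ici a) hcont.continuousOn
      (fun x _ => (hf x).hasDerivWithinAt) fun x hx => hf' x ?_
    rw [interior_Ici] at hx
    exact hx.ne'

theorem existsUnique_eq_self_of_abs_sub_le {f : ℝ → ℝ} {c C : ℝ} (hf : Continuous f)
    (hbound : ∀ x, |f x - c| ≤ C) (hmono : StrictMono fun x => x - f x) :
    ∃! x, f x = x := by
  have hC : 0 ≤ C := (abs_nonneg _).trans (hbound 0)
  have hlow : (c - C) - f (c - C) ≤ 0 := by linarith [(abs_le.1 (hbound (c - C))).1]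
  have hhigh : 0 ≤ (c + C) - f (c + C) := by linarith [(abs_le.1 (hbound (c + C))).2]
  obtain ⟨x, -, hx⟩ := intermediate_value_Icc (by linarith : c - C ≤ c + C)
    (continuous_id.sub hf).continuousOn ⟨hlow, hhigh⟩
  have hx : x - f x = 0 := hx
  refine ⟨x, by linarith, fun y hy => hmono.injective ?_⟩
  simp only [hy, sub_self, hx]

theorem unique_fixed_point_high_temperature_general
    (d : ℕ) (θ : ℝ) (hθ : θ ∈ Set.Ioo (0 : ℝ) 1)
    (hdθ : (d : ℝ) * θ ≤ 1) (h : ℝ) :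
    ∃! x : ℝ, h + d * arctanh (θ * Real.tanh x) = x := by
  obtain ⟨hθ₀, hθ₁⟩ := hθ
  have hθ_abs : |θ| ≤ 1 := by rw [abs_of_pos hθ₀]; exact hθ₁.le
  have hψ : ∀ x, HasDerivAt (fun x => h + d * arctanh (θ * tanh x))
      (d * (θ / (1 + (1 - θ ^ 2) * sinh x ^ 2))) x := fun x =>
    ((hasDerivAt_arctanh_mul_tanh hθ_abs x).const_mul _).const_add h
  have hbound : ∀ x, |h + d * arctanh (θ * tanh x) - h| ≤ d * arctanh θ := fun x => by
    have hy : |θ * tanh x| ≤ θ := by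
      rw [abs_mul, abs_of_pos hθ₀]
      exact mul_le_of_le_one_right hθ₀.le (abs_tanh_lt_one x).le
    rw [add_sub_cancel_left, abs_mul, Nat.abs_cast]
    exact mul_le_mul_of_nonneg_left (abs_arctanh_le hy hθ₁) d.cast_nonneg
  have hslope : ∀ x ≠ 0, 0 < 1 - d * (θ / (1 + (1 - θ ^ 2) * sinh x ^ 2)) := fun x hx => by
    have hs : 0 < sinh x ^ 2 := sq_pos_of_ne_zero (sinh_ne_zero.2 hx)
    have hD : 1 < 1 + (1 - θ ^ 2) * sinh x ^ 2 := lt_add_of_pos_right 1 (mul_pos (by nlinarith) hs)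
    rw [sub_pos, ← mul_div_assoc, div_lt_one (by linarith)]
    linarith
  exact existsUnique_eq_self_of_abs_sub_le
    (continuous_iff_continuousAt.2 fun x => (hψ x).continuousAt) hbound
    (strictMono_of_hasDerivAt_pos_of_ne 0 (fun x => (hasDerivAt_id x).sub (hψ x)) hslope)

/-- if `d·θ ≤ 1` (high temperature), the recursion map
`ψ(x) = h + d·arctanh(θ·tanh x)` has exactly one fixed point. -/
theorem unique_fixed_point_high_temperature
    (d : ℕ) (hd : 1 ≤ d) (θ : ℝ) (hθ : θ ∈ Set.Ioo (0 : ℝ) 1)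
    (hdθ : (d : ℝ) * θ ≤ 1) (h : ℝ) :
    ∃! x : ℝ, h + d * arctanh (θ * Real.tanh x) = x :=
  unique_fixed_point_high_temperature_general d θ hθ hdθ h
end

section
/- Let θ ∈ (0,1). Then the function F(x) = arctanh(θ·tanh x) is strictly concave on (0,∞); consequently, for any h ∈ ℝ and integer d ≥ 1, ψ(x) = h + d·F(x) is strictly concave on (0,∞). -/
open Real Set

theorem StrictConcaveOn.const_mul {𝕜 E : Type*} [Field 𝕜] [LinearOrder 𝕜]
    [IsStrictOrderedRing 𝕜] [AddCommMonoid E] [Module 𝕜 E] {s : Set E} {f : E → 𝕜} {c : 𝕜}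
    (hc : 0 < c) (hf : StrictConcaveOn 𝕜 s f) : StrictConcaveOn 𝕜 s fun x => c * f x := by
  refine ⟨hf.1, fun x hx y hy hxy a b ha hb hab => ?_⟩
  calc a • (c * f x) + b • (c * f y) = c * (a • f x + b • f y) := by simp only [smul_eq_mul]; ring
    _ < c * f (a • x + b • y) := mul_lt_mul_of_pos_left (hf.2 hx hy hxy ha hb hab) hc

theorem cosh_add_mul_sinh_pos {θ : ℝ} (hθ : |θ| ≤ 1) (x : ℝ) : 0 < cosh x + θ * sinh x := by
  linarith [(abs_lt.mp (abs_mul_sinh_lt_cosh hθ x)).1]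

theorem cosh_sub_mul_sinh_pos {θ : ℝ} (hθ : |θ| ≤ 1) (x : ℝ) : 0 < cosh x - θ * sinh x := by
  linarith [(abs_lt.mp (abs_mul_sinh_lt_cosh hθ x)).2]

theorem strictAntiOn_div_one_add_mul_sinh_sq {c k : ℝ} (hc : 0 < c) (hk : 0 < k) :
    StrictAntiOn (fun x => c / (1 + k * sinh x ^ 2)) (Ioi 0) := by
  intro x hx y _ hxy
  have hsinh : sinh x ^ 2 < sinh y ^ 2 :=
    pow_lt_pow_left₀ (sinh_lt_sinh.mpr hxy) (sinh_pos_iff.mpr hx).le two_ne_zero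
  exact div_lt_div_of_pos_left hc (by positivity) (by gcongr)

theorem strictConcaveOn_arctanh_mul_tanh {θ : ℝ} (hθ : θ ∈ Ioo 0 1) :
    StrictConcaveOn ℝ (Ioi 0) fun x => arctanh (θ * tanh x) := by
  obtain ⟨hθ₀, hθ₁⟩ := hθ
  have habs : |θ| ≤ 1 := abs_le.mpr ⟨by linarith, hθ₁.le⟩
  have hderiv := fun x => hasDerivAt_arctanh_mul_tanh habs x
  refine StrictAntiOn.strictConcaveOn_of_deriv (convex_Ioi 0)
    (fun x _ => (hderiv x).continuousAt.continuousWithinAt) ?_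
  rw [interior_Ioi, funext fun x => (hderiv x).deriv]
  exact strictAntiOn_div_one_add_mul_sinh_sq hθ₀ (by nlinarith)

/-- for `θ ∈ (0,1)`, `F(x) = arctanh(θ·tanh x)` is strictly concave on
`(0,∞)`; consequently so is `ψ(x) = h + d·F(x)` for any `h ∈ ℝ` and integer `d ≥ 1`. -/
theorem transfer_function_strictly_concave
    (θ : ℝ) (hθ : θ ∈ Set.Ioo (0 : ℝ) 1) :
    StrictConcaveOn ℝ (Set.Ioi (0 : ℝ)) (fun x => arctanh (θ * Real.tanh x)) ∧
    ∀ (h : ℝ) (d : ℕ), 1 ≤ d →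
      StrictConcaveOn ℝ (Set.Ioi (0 : ℝ))
        (fun x => h + d * arctanh (θ * Real.tanh x)) := by
  have hF := strictConcaveOn_arctanh_mul_tanh hθ
  refine ⟨hF, fun h d hd => ?_⟩
  have hd₀ : (0 : ℝ) < d := by exact_mod_cast hd
  exact ((hF.const_mul hd₀).add_const h).congr fun x _ => add_comm _ _
end
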